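/- arXiv:2207.08406 — 10 statements merged into one kernel-verified Lean document; each statement's English description precedes it below -/
import Mathlib

section
/- Fix x ∈ ℝ with x > −1. Then the function β ↦ log(β·(1+x)^(1−β) + (1−β)·(1+x)^(−β)) / (β·(1−β)) tends to x − log(1+x) as β tends to 0 within the open interval (0,1). -/
/-!
Factor `(1 + x) ^ (-β)` out of the argument of the logarithm: what remains is `1 + β x`, so the
quotient equals `(log (1 + β x) / β - log (1 + x)) / (1 - β)`. As `β → 0` the difference quotient
`log (1 + β x) / β` tends to the derivative `x` of `β ↦ log (1 + β x)` at `0`.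
-/

open Real Filter Topology

lemma mul_rpow_one_sub_add_one_sub_mul_rpow_neg {x : ℝ} (hx : 0 < 1 + x) (β : ℝ) :
    β * (1 + x) ^ (1 - β) + (1 - β) * (1 + x) ^ (-β) = (1 + x) ^ (-β) * (1 + β * x) := by
  rw [sub_eq_neg_add, rpow_add hx, rpow_one]
  ring

lemma tendsto_log_one_add_mul_div (x : ℝ) :
    Tendsto (fun β : ℝ => log (1 + β * x) / β) (𝓝[≠] 0) (𝓝 x) := by
  have hderiv : HasDerivAt (fun β : ℝ => log (1 + β * x)) x 0 := by
    simpa using (((hasDerivAt_id (0 : ℝ)).mul_const x).const_add 1).log (by simp)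
  refine hderiv.tendsto_slope_zero.congr fun β => ?_
  simp [div_eq_inv_mul]

lemma log_mul_rpow_one_sub_add_div_eq {x β : ℝ} (hx : 0 < 1 + x) (hβ : β ∈ Set.Ioo 0 1) :
    log (β * (1 + x) ^ (1 - β) + (1 - β) * (1 + x) ^ (-β)) / (β * (1 - β))
      = (log (1 + β * x) / β - log (1 + x)) / (1 - β) := by
  obtain ⟨hβ₀, hβ₁⟩ := hβ
  have hpos : 0 < 1 + β * x := by nlinarith
  rw [mul_rpow_one_sub_add_one_sub_mul_rpow_neg hx,
    log_mul (rpow_pos_of_pos hx _).ne' hpos.ne', log_rpow hx]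
  field_simp [sub_ne_zero.mpr hβ₁.ne']
  ring

theorem renyi_logdet_limit_beta_zero (x : ℝ) (hx : -1 < x) :
    Tendsto (fun β : ℝ =>
        Real.log (β * (1 + x) ^ (1 - β) + (1 - β) * (1 + x) ^ (-β)) / (β * (1 - β)))
      (nhdsWithin 0 (Set.Ioo (0 : ℝ) 1)) (nhds (x - Real.log (1 + x))) := by
  have hx' : 0 < 1 + x := by linarith
  have hquot : Tendsto (fun β : ℝ => log (1 + β * x) / β) (𝓝[Set.Ioo 0 1] 0) (𝓝 x) :=
    (tendsto_log_one_add_mul_div x).mono_left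
      (nhdsWithin_mono _ fun β hβ => (Set.mem_Ioo.mp hβ).1.ne')
  have hdenom : Tendsto (fun β : ℝ => 1 - β) (𝓝[Set.Ioo 0 1] 0) (𝓝 1) :=
    ((continuous_sub_left 1).tendsto' 0 1 (sub_zero 1)).mono_left nhdsWithin_le_nhds
  have hlim := (hquot.sub_const (log (1 + x))).div hdenom one_ne_zero
  rw [div_one] at hlim
  refine hlim.congr' ?_
  filter_upwards [self_mem_nhdsWithin] with β hβ
  exact (log_mul_rpow_one_sub_add_div_eq hx' hβ).symm
end

section
/- Let β ∈ [0,1] and x ∈ ℝ with x > −1. Then 0 ≤ log(β·(1+x)^(1−β) + (1−β)·(1+x)^(−β)) ≤ β·(1−β)·x²/(1+x). Moreover, if 0 < β < 1, then log(β·(1+x)^(1−β) + (1−β)·(1+x)^(−β)) = 0 if and only if x = 0, and log(β·(1+x)^(1−β) + (1−β)·(1+x)^(−β)) = β·(1−β)·x²/(1+x) if and only if x = 0. -/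
open Real

theorem log_sum_rpow_bound (β x : ℝ) (hβ0 : 0 ≤ β) (hβ1 : β ≤ 1) (hx : -1 < x) :
    0 ≤ Real.log (β * (1 + x) ^ (1 - β) + (1 - β) * (1 + x) ^ (-β)) ∧
    Real.log (β * (1 + x) ^ (1 - β) + (1 - β) * (1 + x) ^ (-β)) ≤
      β * (1 - β) * x ^ 2 / (1 + x) ∧
    (0 < β → β < 1 →
      (Real.log (β * (1 + x) ^ (1 - β) + (1 - β) * (1 + x) ^ (-β)) = 0 ↔ x = 0) ∧
      (Real.log (β * (1 + x) ^ (1 - β) + (1 - β) * (1 + x) ^ (-β)) =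
          β * (1 - β) * x ^ 2 / (1 + x) ↔ x = 0)) := by
  have ht : (0:ℝ) < 1 + x := by linarith
  have h1 : (0:ℝ) < 1 + β * x := by
    rcases eq_or_lt_of_le hβ0 with h | h
    · simp [← h]
    · nlinarith
  -- key identity
  have key : β * (1 + x) ^ (1 - β) + (1 - β) * (1 + x) ^ (-β)
      = (1 + x) ^ (-β) * (1 + β * x) := by
    rw [show (1:ℝ) - β = 1 + (-β) by ring, Real.rpow_add ht, Real.rpow_one]
    ring
  have hlog : Real.log (β * (1 + x) ^ (1 - β) + (1 - β) * (1 + x) ^ (-β))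
      = Real.log (1 + β * x) - β * Real.log (1 + x) := by
    rw [key, Real.log_mul (Real.rpow_pos_of_pos ht (-β)).ne' h1.ne',
      Real.log_rpow ht]
    ring
  -- lower bound
  have lb : β * Real.log (1 + x) ≤ Real.log (1 + β * x) := by
    have hcc := (strictConcaveOn_log_Ioi.concaveOn).2 (Set.mem_Ioi.2 ht)
      (Set.mem_Ioi.2 one_pos) hβ0 (by linarith : (0:ℝ) ≤ 1 - β) (by ring)
    simp only [smul_eq_mul, Real.log_one, mul_zero, add_zero, mul_one] at hcc
    rwa [show β * (1 + x) + (1 - β) = 1 + β * x by ring] at hcc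
  -- strict lower bound
  have lbs : 0 < β → β < 1 → x ≠ 0 →
      β * Real.log (1 + x) < Real.log (1 + β * x) := by
    intro hb0 hb1 hx0
    have hne : (1 + x) ≠ (1:ℝ) := fun h => hx0 (by linarith)
    have hcc := strictConcaveOn_log_Ioi.2 (Set.mem_Ioi.2 ht)
      (Set.mem_Ioi.2 one_pos) hne hb0 (by linarith : (0:ℝ) < 1 - β) (by ring)
    simp only [smul_eq_mul, Real.log_one, mul_zero, add_zero, mul_one] at hcc
    rwa [show β * (1 + x) + (1 - β) = 1 + β * x by ring] at hcc
  -- upper bound pieces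
  have hA : Real.log (1 + β * x) ≤ β * x := by
    have := Real.log_le_sub_one_of_pos h1; linarith
  have hBval : (1 + β * x) / (1 + x) - 1 = -((1 - β) * x) / (1 + x) := by
    field_simp
    ring
  have hB : Real.log (1 + β * x) - Real.log (1 + x) ≤ -((1 - β) * x) / (1 + x) := by
    have h2 : 0 < (1 + β * x) / (1 + x) := div_pos h1 ht
    have := Real.log_le_sub_one_of_pos h2
    rw [Real.log_div h1.ne' ht.ne'] at this
    linarith [hBval]
  have hcomb : (1 - β) * (β * x) + β * (-((1 - β) * x) / (1 + x))
      = β * (1 - β) * x ^ 2 / (1 + x) := by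
    field_simp
    ring
  have ub : Real.log (1 + β * x) - β * Real.log (1 + x)
      ≤ β * (1 - β) * x ^ 2 / (1 + x) := by
    have h3 : (1 - β) * Real.log (1 + β * x) ≤ (1 - β) * (β * x) :=
      mul_le_mul_of_nonneg_left hA (by linarith)
    have h4 : β * (Real.log (1 + β * x) - Real.log (1 + x))
        ≤ β * (-((1 - β) * x) / (1 + x)) := mul_le_mul_of_nonneg_left hB hβ0
    nlinarith [hcomb]
  -- strict upper bound
  have ubs : 0 < β → β < 1 → x ≠ 0 →
      Real.log (1 + β * x) - β * Real.log (1 + x)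
        < β * (1 - β) * x ^ 2 / (1 + x) := by
    intro hb0 hb1 hx0
    have hne : (1 + β * x) / (1 + x) ≠ 1 := by
      intro h
      rw [div_eq_one_iff_eq ht.ne'] at h
      have : (β - 1) * x = 0 := by linarith
      rcases mul_eq_zero.1 this with h' | h'
      · linarith
      · exact hx0 h'
    have h2 : 0 < (1 + β * x) / (1 + x) := div_pos h1 ht
    have hBs : Real.log (1 + β * x) - Real.log (1 + x) < -((1 - β) * x) / (1 + x) := by
      have := Real.log_lt_sub_one_of_pos h2 hne
      rw [Real.log_div h1.ne' ht.ne'] at this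
      linarith [hBval]
    have h3 : (1 - β) * Real.log (1 + β * x) ≤ (1 - β) * (β * x) :=
      mul_le_mul_of_nonneg_left hA (by linarith)
    have h4 : β * (Real.log (1 + β * x) - Real.log (1 + x))
        < β * (-((1 - β) * x) / (1 + x)) := by
      exact mul_lt_mul_of_pos_left hBs hb0
    nlinarith [hcomb]
  rw [hlog]
  refine ⟨by linarith, ub, fun hb0 hb1 => ⟨?_, ?_⟩⟩
  · constructor
    · intro h
      by_contra hx0
      have := lbs hb0 hb1 hx0
      linarith
    · intro h; subst h; simp
  · constructor
    · intro h
      by_contra hx0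
      have := ubs hb0 hb1 hx0
      linarith
    · intro h; subst h; simp
end

section
/- Let β ∈ [0,1] and x ∈ ℝ with x ≥ 0. Then 0 ≤ log(β·(1+x)^(1−β) + (1−β)·(1+x)^(−β)) ≤ (β·(1−β)/2)·x². Moreover, if 0 < β < 1, then each of the two inequalities is an equality if and only if x = 0. -/
/-!
Since `β (1+x)^(1-β) + (1-β) (1+x)^(-β) = (1+x)^(-β) (1+βx)`, the logarithm is
`g x = log (1+βx) - β log (1+x)`. For `0 < β < 1` and `x > 0`, `g x > 0` is Bernoulli's inequality
`(1+x)^β < 1+βx`, and `g x < β(1-β)x²/2` because `g 0 = 0` and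
`g' t = β(1-β)t / ((1+βt)(1+t)) < β(1-β)t` for `t > 0`. For `β ∈ {0, 1}`, `g` vanishes identically.
-/

open Real Set

theorem log_weighted_rpow_sum_eq {β x : ℝ} (hx : 0 < 1 + x) (hβx : 1 + β * x ≠ 0) :
    log (β * (1 + x) ^ (1 - β) + (1 - β) * (1 + x) ^ (-β)) =
      log (1 + β * x) - β * log (1 + x) := by
  have hsum : β * (1 + x) ^ (1 - β) + (1 - β) * (1 + x) ^ (-β) = (1 + x) ^ (-β) * (1 + β * x) := by
    rw [sub_eq_add_neg, rpow_add hx, rpow_one]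
    ring
  rw [hsum, log_mul (rpow_pos_of_pos hx _).ne' hβx, log_rpow hx]
  ring

theorem mul_log_one_add_lt_log_one_add_mul {β x : ℝ} (hβ0 : 0 < β) (hβ1 : β < 1) (hx : -1 < x)
    (hx0 : x ≠ 0) : β * log (1 + x) < log (1 + β * x) := by
  have hx' : 0 < 1 + x := by linarith
  rw [← log_rpow hx']
  exact log_lt_log (rpow_pos_of_pos hx' β) (rpow_one_add_lt_one_add_mul_self hx.le hx0 hβ0 hβ1)

theorem hasDerivAt_log_one_add_mul_sub_mul_log_one_add {β t : ℝ} (hβt : 1 + β * t ≠ 0)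
    (ht : 1 + t ≠ 0) :
    HasDerivAt (fun s => log (1 + β * s) - β * log (1 + s))
      (β * (1 - β) * t / ((1 + β * t) * (1 + t))) t := by
  have hlogβ := (((hasDerivAt_id t).const_mul β).const_add 1).log hβt
  have hlog := ((hasDerivAt_id t).const_add 1).log ht
  refine (hlogβ.sub (hlog.const_mul β)).congr_deriv ?_
  simp only [id]
  field_simp
  ring

theorem log_one_add_mul_sub_mul_log_one_add_lt {β x : ℝ} (hβ0 : 0 < β) (hβ1 : β < 1)
    (hx : 0 < x) : log (1 + β * x) - β * log (1 + x) < β * (1 - β) / 2 * x ^ 2 := by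
  let f t := β * (1 - β) / 2 * t ^ 2 - (log (1 + β * t) - β * log (1 + t))
  let f' t := β * (1 - β) * t - β * (1 - β) * t / ((1 + β * t) * (1 + t))
  have hf : ∀ t ∈ Ici (0 : ℝ), HasDerivAt f (f' t) t := fun t ht => by
    have hβt : 0 < 1 + β * t := by nlinarith [mem_Ici.1 ht]
    have ht' : 0 < 1 + t := by linarith [mem_Ici.1 ht]
    refine (((hasDerivAt_pow 2 t).const_mul (β * (1 - β) / 2)).sub
      (hasDerivAt_log_one_add_mul_sub_mul_log_one_add hβt.ne' ht'.ne')).congr_deriv ?_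
    simp only [f']
    ring
  have hf'_pos : ∀ t ∈ interior (Ici (0 : ℝ)), 0 < f' t := fun t ht => by
    rw [interior_Ici, mem_Ioi] at ht
    have hcoeff : 0 < β * (1 - β) * t := by have := sub_pos.2 hβ1; positivity
    exact sub_pos.2 (div_lt_self hcoeff (by nlinarith))
  have hmono : StrictMonoOn f (Ici 0) :=
    strictMonoOn_of_hasDerivWithinAt_pos (convex_Ici 0)
      (continuousOn_of_forall_continuousAt fun t ht => (hf t ht).continuousAt)
      (fun t ht => (hf t (interior_subset ht)).hasDerivWithinAt) hf'_pos
  simpa [f] using hmono self_mem_Ici hx.le hx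

theorem log_sum_rpow_bound_nonneg (β x : ℝ) (hβ0 : 0 ≤ β) (hβ1 : β ≤ 1) (hx : 0 ≤ x) :
    0 ≤ Real.log (β * (1 + x) ^ (1 - β) + (1 - β) * (1 + x) ^ (-β)) ∧
    Real.log (β * (1 + x) ^ (1 - β) + (1 - β) * (1 + x) ^ (-β)) ≤
      β * (1 - β) / 2 * x ^ 2 ∧
    (0 < β → β < 1 →
      (Real.log (β * (1 + x) ^ (1 - β) + (1 - β) * (1 + x) ^ (-β)) = 0 ↔ x = 0) ∧
      (Real.log (β * (1 + x) ^ (1 - β) + (1 - β) * (1 + x) ^ (-β)) =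
          β * (1 - β) / 2 * x ^ 2 ↔ x = 0)) := by
  rw [log_weighted_rpow_sum_eq (by linarith) (by nlinarith : 0 < 1 + β * x).ne']
  rcases hx.eq_or_lt with rfl | hx
  · simp
  have hstrict (hβ0 : 0 < β) (hβ1 : β < 1) :
      0 < log (1 + β * x) - β * log (1 + x) ∧
        log (1 + β * x) - β * log (1 + x) < β * (1 - β) / 2 * x ^ 2 :=
    ⟨sub_pos.2 (mul_log_one_add_lt_log_one_add_mul hβ0 hβ1 (by linarith) hx.ne'),
      log_one_add_mul_sub_mul_log_one_add_lt hβ0 hβ1 hx⟩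
  have hweak : 0 ≤ log (1 + β * x) - β * log (1 + x) ∧
      log (1 + β * x) - β * log (1 + x) ≤ β * (1 - β) / 2 * x ^ 2 := by
    rcases hβ0.eq_or_lt with rfl | hβ0
    · simp
    rcases hβ1.eq_or_lt with rfl | hβ1
    · simp
    exact (hstrict hβ0 hβ1).imp le_of_lt le_of_lt
  exact ⟨hweak.1, hweak.2, fun hβ0 hβ1 =>
    ⟨iff_of_false (hstrict hβ0 hβ1).1.ne' hx.ne', iff_of_false (hstrict hβ0 hβ1).2.ne hx.ne'⟩⟩
end

section
/- Let β ∈ [0,1] and x, y ∈ ℝ with x ≥ 0 and y ≥ 0. Then |log(β·(1+x)^(1−β) + (1−β)·(1+x)^(−β)) − log(β·(1+y)^(1−β) + (1−β)·(1+y)^(−β))| ≤ (β·(1−β)/2)·|x² − y²|. -/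
/-!
Since `β (1+t)^(1-β) + (1-β) (1+t)^(-β) = (1+t)^(-β) (1 + β t)`, the function in question is
`F t = log (1 + β t) - β log (1 + t)`, whose derivative `β (1-β) t / ((1 + β t)(1 + t))` lies
between `0` and `β (1-β) t` for `t ≥ 0`. Hence both `F` and `β (1-β) t² / 2 - F` are monotone on
`[0, ∞)`, so the increments of `F` are dominated by those of `β (1-β) t² / 2`.
-/

open Real Set

theorem abs_sub_le_abs_sub_of_monotoneOn {α M : Type*} [LinearOrder α] [AddCommGroup M]
    [LinearOrder M] [IsOrderedAddMonoid M] {f g : α → M} {s : Set α} (hf : MonotoneOn f s)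
    (hgf : MonotoneOn (g - f) s) {a b : α} (ha : a ∈ s) (hb : b ∈ s) :
    |f a - f b| ≤ |g a - g b| := by
  wlog hab : a ≤ b generalizing a b
  · rw [abs_sub_comm, abs_sub_comm (g a)]
    exact this hb ha (le_of_not_ge hab)
  have hfab : f a ≤ f b := hf ha hb hab
  have hgfab : g a - f a ≤ g b - f b := hgf ha hb hab
  rw [abs_sub_comm, abs_sub_comm (g a), abs_of_nonneg (sub_nonneg.2 hfab)]
  refine le_trans ?_ (le_abs_self _)
  rw [sub_le_sub_iff] at hgfab ⊢
  rwa [add_comm (f b)]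

theorem monotoneOn_Ici_of_hasDerivAt_nonneg {f f' : ℝ → ℝ} {a : ℝ}
    (hf : ∀ t ∈ Ici a, HasDerivAt f (f' t) t) (hf' : ∀ t ∈ Ioi a, 0 ≤ f' t) :
    MonotoneOn f (Ici a) :=
  monotoneOn_of_hasDerivWithinAt_nonneg (convex_Ici a)
    (fun t ht => (hf t ht).continuousAt.continuousWithinAt)
    (by rw [interior_Ici]; exact fun t ht => (hf t (mem_Ici.2 ht.le)).hasDerivWithinAt)
    (by rwa [interior_Ici])

theorem log_mul_rpow_one_sub_add_mul_rpow_neg (β t : ℝ) (ht : 0 < 1 + t)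
    (hβt : 0 < 1 + β * t) :
    log (β * (1 + t) ^ (1 - β) + (1 - β) * (1 + t) ^ (-β)) =
      log (1 + β * t) - β * log (1 + t) := by
  have hsplit : (1 + t) ^ (1 - β) = (1 + t) ^ (-β) * (1 + t) := by
    rw [sub_eq_neg_add, rpow_add ht, rpow_one]
  have hfactor : β * (1 + t) ^ (1 - β) + (1 - β) * (1 + t) ^ (-β) =
      (1 + t) ^ (-β) * (1 + β * t) := by
    rw [hsplit]; ring
  rw [hfactor, log_mul (rpow_pos_of_pos ht _).ne' hβt.ne', log_rpow ht]
  ring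

theorem hasDerivAt_log_one_add_mul_sub_mul_log (β t : ℝ) (ht : 0 < 1 + t)
    (hβt : 0 < 1 + β * t) :
    HasDerivAt (fun s => log (1 + β * s) - β * log (1 + s))
      (β * (1 - β) * t / ((1 + β * t) * (1 + t))) t := by
  have hβs : HasDerivAt (fun s => 1 + β * s) β t := by
    simpa using ((hasDerivAt_id t).const_mul β).const_add 1
  have hs : HasDerivAt (fun s => 1 + s) 1 t := (hasDerivAt_id t).const_add 1
  refine ((hβs.log hβt.ne').sub ((hs.log ht.ne').const_mul β)).congr_deriv ?_
  field_simp
  ring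

theorem log_sum_rpow_lipschitz_nonneg (β x y : ℝ) (hβ0 : 0 ≤ β) (hβ1 : β ≤ 1)
    (hx : 0 ≤ x) (hy : 0 ≤ y) :
    |Real.log (β * (1 + x) ^ (1 - β) + (1 - β) * (1 + x) ^ (-β)) -
        Real.log (β * (1 + y) ^ (1 - β) + (1 - β) * (1 + y) ^ (-β))| ≤
      β * (1 - β) / 2 * |x ^ 2 - y ^ 2| := by
  set F : ℝ → ℝ := fun s => log (1 + β * s) - β * log (1 + s)
  set F' : ℝ → ℝ := fun s => β * (1 - β) * s / ((1 + β * s) * (1 + s))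
  set G : ℝ → ℝ := fun s => β * (1 - β) / 2 * s ^ 2
  have hc : 0 ≤ β * (1 - β) := mul_nonneg hβ0 (sub_nonneg.2 hβ1)
  have hF : ∀ t ∈ Ici (0 : ℝ), HasDerivAt F (F' t) t := fun t (ht : 0 ≤ t) =>
    hasDerivAt_log_one_add_mul_sub_mul_log β t (by linarith) (by nlinarith)
  have hGF : ∀ t ∈ Ici (0 : ℝ), HasDerivAt (G - F) (β * (1 - β) * t - F' t) t := by
    intro t ht
    refine (((hasDerivAt_pow 2 t).const_mul (β * (1 - β) / 2)).sub (hF t ht)).congr_deriv ?_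
    ring
  have hF'_nonneg : ∀ t ∈ Ioi (0 : ℝ), 0 ≤ F' t := fun t (ht : 0 < t) =>
    div_nonneg (mul_nonneg hc ht.le) (by positivity)
  have hF'_le : ∀ t ∈ Ioi (0 : ℝ), F' t ≤ β * (1 - β) * t := fun t (ht : 0 < t) =>
    div_le_self (mul_nonneg hc ht.le) (one_le_mul_of_one_le_of_one_le
      (by nlinarith) (by linarith))
  calc _ = |F x - F y| := by
        rw [log_mul_rpow_one_sub_add_mul_rpow_neg β x (by linarith) (by nlinarith),
          log_mul_rpow_one_sub_add_mul_rpow_neg β y (by linarith) (by nlinarith)]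
    _ ≤ |G x - G y| := abs_sub_le_abs_sub_of_monotoneOn
        (monotoneOn_Ici_of_hasDerivAt_nonneg hF hF'_nonneg)
        (monotoneOn_Ici_of_hasDerivAt_nonneg hGF fun t ht => sub_nonneg.2 (hF'_le t ht)) hx hy
    _ = _ := by rw [← mul_sub, abs_mul, abs_of_nonneg (by positivity)]
end

section
/- Let H be a real Hilbert space and let γ > 0 be fixed. Let C₁, C₂ : H → H be bounded positive operators, and let T₁, T₂ : H → H be bounded linear operators satisfying Tᵢ ∘ (Cᵢ + γ·I) = I = (Cᵢ + γ·I) ∘ Tᵢ for i = 1, 2 (so Tᵢ is the inverse of Cᵢ + γ·I). Then for all m₁, m₂ ∈ H: |⟨m₁, T₁ m₁⟩ − ⟨m₂, T₂ m₂⟩| ≤ (1/γ²)·‖C₁ − C₂‖·‖m₁‖·‖m₂‖ + (1/γ)·‖m₁ − m₂‖·(‖m₁‖ + ‖m₂‖). -/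
open scoped RealInnerProductSpace

theorem inner_inv_reg_diff_bound
    {H : Type*} [NormedAddCommGroup H] [InnerProductSpace ℝ H] [CompleteSpace H]
    (γ : ℝ) (hγ : 0 < γ) (C₁ C₂ T₁ T₂ : H →L[ℝ] H)
    (hC₁sa : ∀ x y : H, ⟪C₁ x, y⟫ = ⟪x, C₁ y⟫)
    (hC₁pos : ∀ x : H, 0 ≤ ⟪x, C₁ x⟫)
    (hC₂sa : ∀ x y : H, ⟪C₂ x, y⟫ = ⟪x, C₂ y⟫)
    (hC₂pos : ∀ x : H, 0 ≤ ⟪x, C₂ x⟫)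
    (hT₁ : T₁ * (C₁ + γ • 1) = 1) (hT₁' : (C₁ + γ • 1) * T₁ = 1)
    (hT₂ : T₂ * (C₂ + γ • 1) = 1) (hT₂' : (C₂ + γ • 1) * T₂ = 1)
    (m₁ m₂ : H) :
    |⟪m₁, T₁ m₁⟫ - ⟪m₂, T₂ m₂⟫| ≤
      (1 / γ ^ 2) * ‖C₁ - C₂‖ * ‖m₁‖ * ‖m₂‖ +
        (1 / γ) * ‖m₁ - m₂‖ * (‖m₁‖ + ‖m₂‖) := by
  -- key bound ‖T x‖ ≤ (1/γ) ‖x‖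
  have hb : ∀ (C T : H →L[ℝ] H), (∀ x : H, 0 ≤ ⟪x, C x⟫) →
      (C + γ • 1) * T = 1 → ∀ x : H, ‖T x‖ ≤ (1 / γ) * ‖x‖ := by
    intro C T hpos hCT x
    set y := T x with hy
    have hyx : C y + γ • y = x := by
      have := congrArg (fun S : H →L[ℝ] H => S x) hCT
      simpa [ContinuousLinearMap.add_apply, ContinuousLinearMap.smul_apply] using this
    have h1 : γ * ‖y‖ ^ 2 ≤ ⟪y, x⟫ := by
      have : ⟪y, x⟫ = ⟪y, C y⟫ + γ * ‖y‖ ^ 2 := by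
        rw [← hyx, inner_add_right, real_inner_smul_right, real_inner_self_eq_norm_sq]
      nlinarith [hpos y]
    have h2 : ⟪y, x⟫ ≤ ‖y‖ * ‖x‖ := real_inner_le_norm y x
    rcases eq_or_lt_of_le (norm_nonneg y) with h0 | h0
    · rw [← h0]; positivity
    · have hle : γ * ‖y‖ ≤ ‖x‖ := by nlinarith [le_trans h1 h2]
      rw [div_mul_eq_mul_div, one_mul, le_div_iff₀ hγ]
      linarith [hle]
  have hb1 := hb C₁ T₁ hC₁pos hT₁'
  have hb2 := hb C₂ T₂ hC₂pos hT₂'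
  -- resolvent identity
  have hres : T₁ - T₂ = T₁ * (C₂ - C₁) * T₂ := by
    have e1 : T₁ * (C₂ + γ • 1) * T₂ = T₁ := by rw [mul_assoc, hT₂', mul_one]
    have e2 : T₁ * (C₁ + γ • 1) * T₂ = T₂ := by rw [hT₁, one_mul]
    calc T₁ - T₂ = T₁ * (C₂ + γ • 1) * T₂ - T₁ * (C₁ + γ • 1) * T₂ := by rw [e1, e2]
      _ = T₁ * (C₂ - C₁) * T₂ := by
          rw [← sub_mul, ← mul_sub, add_sub_add_right_eq_sub]
  have hdiffb : ∀ x : H, ‖(T₁ - T₂) x‖ ≤ (1 / γ ^ 2) * ‖C₁ - C₂‖ * ‖x‖ := by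
    intro x
    have hx : (T₁ - T₂) x = T₁ ((C₂ - C₁) (T₂ x)) := by rw [hres]; rfl
    rw [hx]
    calc ‖T₁ ((C₂ - C₁) (T₂ x))‖ ≤ (1 / γ) * ‖(C₂ - C₁) (T₂ x)‖ := hb1 _
      _ ≤ (1 / γ) * (‖C₂ - C₁‖ * ‖T₂ x‖) := by
          gcongr
          exact (C₂ - C₁).le_opNorm _
      _ ≤ (1 / γ) * (‖C₂ - C₁‖ * ((1 / γ) * ‖x‖)) := by
          gcongr
          exact hb2 x
      _ = (1 / γ ^ 2) * ‖C₁ - C₂‖ * ‖x‖ := by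
          rw [norm_sub_rev]; ring
  -- telescoping decomposition
  have hdec : ⟪m₁, T₁ m₁⟫ - ⟪m₂, T₂ m₂⟫ =
      ⟪m₁, T₁ (m₁ - m₂)⟫ + ⟪m₁, (T₁ - T₂) m₂⟫ + ⟪m₁ - m₂, T₂ m₂⟫ := by
    simp only [map_sub, ContinuousLinearMap.sub_apply, inner_sub_left, inner_sub_right]
    ring
  rw [hdec]
  have b1 : |⟪m₁, T₁ (m₁ - m₂)⟫| ≤ ‖m₁‖ * ((1 / γ) * ‖m₁ - m₂‖) :=
    le_trans (abs_real_inner_le_norm _ _) (by gcongr; exact hb1 _)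
  have b2 : |⟪m₁, (T₁ - T₂) m₂⟫| ≤ ‖m₁‖ * ((1 / γ ^ 2) * ‖C₁ - C₂‖ * ‖m₂‖) :=
    le_trans (abs_real_inner_le_norm _ _) (by gcongr; exact hdiffb _)
  have b3 : |⟪m₁ - m₂, T₂ m₂⟫| ≤ ‖m₁ - m₂‖ * ((1 / γ) * ‖m₂‖) :=
    le_trans (abs_real_inner_le_norm _ _) (by gcongr; exact hb2 _)
  calc |⟪m₁, T₁ (m₁ - m₂)⟫ + ⟪m₁, (T₁ - T₂) m₂⟫ + ⟪m₁ - m₂, T₂ m₂⟫|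
      ≤ |⟪m₁, T₁ (m₁ - m₂)⟫| + |⟪m₁, (T₁ - T₂) m₂⟫| + |⟪m₁ - m₂, T₂ m₂⟫| :=
        (abs_add_le _ _).trans (by gcongr; exact abs_add_le _ _)
    _ ≤ ‖m₁‖ * ((1 / γ) * ‖m₁ - m₂‖) + ‖m₁‖ * ((1 / γ ^ 2) * ‖C₁ - C₂‖ * ‖m₂‖)
        + ‖m₁ - m₂‖ * ((1 / γ) * ‖m₂‖) := by gcongr
    _ = (1 / γ ^ 2) * ‖C₁ - C₂‖ * ‖m₁‖ * ‖m₂‖ +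
        (1 / γ) * ‖m₁ - m₂‖ * (‖m₁‖ + ‖m₂‖) := by ring
end

section
/- Let n, p, q be finite index types, let A be a real n×p matrix, B a real n×q matrix, and m ∈ ℝⁿ. Set M = fromBlocks (Aᵀ·A) (Aᵀ·B) (Bᵀ·A) (Bᵀ·B), a matrix indexed by p ⊕ q. Then the matrices 1ₙ + A·Aᵀ + B·Bᵀ and 1 + M are positive definite (hence invertible), and ⟨m, (1ₙ + A·Aᵀ + B·Bᵀ)⁻¹ m⟩ = ‖m‖² − ⟨v, (1 + M)⁻¹ v⟩, where v ∈ ℝ^(p⊕q) is the vector whose p-block is Aᵀ·m and whose q-block is Bᵀ·m, ⟨u, w⟩ denotes the Euclidean dot product, and ‖m‖² = ⟨m, m⟩. -/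
/-!
Write `C = [A B]`, so that `A Aᵀ + B Bᵀ = C Cᵀ`, the block matrix is the Gram matrix `Cᵀ C`,
and the block vector is `Cᵀ m`. Both `1 + C Cᵀ` and `1 + Cᵀ C` are the identity plus a positive
semidefinite matrix, and the push-through form of the Woodbury identity
`(1 + C Cᵀ)⁻¹ = 1 - C (1 + Cᵀ C)⁻¹ Cᵀ` gives the quadratic form identity.
-/

open Matrix

namespace Matrix

lemma inv_one_add_mul_eq_sub {α k l : Type*} [CommRing α] [Fintype k] [Fintype l]
    [DecidableEq k] [DecidableEq l] (U : Matrix k l α) (V : Matrix l k α)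
    (h : IsUnit (1 + V * U)) :
    (1 + U * V)⁻¹ = 1 - U * (1 + V * U)⁻¹ * V := by
  simpa using add_mul_mul_inv_eq_sub 1 U 1 V isUnit_one isUnit_one (by simpa using h)

lemma dotProduct_inv_one_add_mul_transpose_mulVec {α k l : Type*} [CommRing α]
    [Fintype k] [Fintype l] [DecidableEq k] [DecidableEq l] (C : Matrix k l α)
    (h : IsUnit (1 + Cᵀ * C)) (x : k → α) :
    x ⬝ᵥ ((1 + C * Cᵀ)⁻¹ *ᵥ x) = x ⬝ᵥ x - (Cᵀ *ᵥ x) ⬝ᵥ ((1 + Cᵀ * C)⁻¹ *ᵥ (Cᵀ *ᵥ x)) := by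
  rw [inv_one_add_mul_eq_sub C Cᵀ h, sub_mulVec, one_mulVec, dotProduct_sub,
    ← mulVec_mulVec, ← mulVec_mulVec, dotProduct_mulVec x C, ← mulVec_transpose]

lemma posDef_one_add_mul_transpose {k l : Type*} [Fintype k] [Fintype l] [DecidableEq k]
    (C : Matrix k l ℝ) : (1 + C * Cᵀ).PosDef := by
  simpa [conjTranspose_eq_transpose_of_trivial] using
    PosDef.one.add_posSemidef (posSemidef_self_mul_conjTranspose C)

lemma posDef_one_add_transpose_mul {k l : Type*} [Fintype k] [Fintype l] [DecidableEq l]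
    (C : Matrix k l ℝ) : (1 + Cᵀ * C).PosDef := by
  simpa using posDef_one_add_mul_transpose Cᵀ

end Matrix

theorem inner_inv_one_add_mul_transpose_add_mul_transpose
    {n p q : Type*} [Fintype n] [Fintype p] [Fintype q]
    [DecidableEq n] [DecidableEq p] [DecidableEq q]
    (A : Matrix n p ℝ) (B : Matrix n q ℝ) (m : n → ℝ) :
    (1 + A * Aᵀ + B * Bᵀ).PosDef ∧
    (1 + Matrix.fromBlocks (Aᵀ * A) (Aᵀ * B) (Bᵀ * A) (Bᵀ * B)).PosDef ∧
    m ⬝ᵥ ((1 + A * Aᵀ + B * Bᵀ)⁻¹ *ᵥ m) =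
      m ⬝ᵥ m -
        (Sum.elim (Aᵀ *ᵥ m) (Bᵀ *ᵥ m)) ⬝ᵥ
          ((1 + Matrix.fromBlocks (Aᵀ * A) (Aᵀ * B) (Bᵀ * A) (Bᵀ * B))⁻¹ *ᵥ
            Sum.elim (Aᵀ *ᵥ m) (Bᵀ *ᵥ m)) := by
  set C := fromCols A B
  have hCt : Cᵀ = fromRows Aᵀ Bᵀ := transpose_fromCols A B
  have hCCt : A * Aᵀ + B * Bᵀ = C * Cᵀ := by rw [hCt, fromCols_mul_fromRows]
  have hCtC : fromBlocks (Aᵀ * A) (Aᵀ * B) (Bᵀ * A) (Bᵀ * B) = Cᵀ * C := by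
    rw [hCt, fromRows_mul_fromCols]
  have hCtm : Sum.elim (Aᵀ *ᵥ m) (Bᵀ *ᵥ m) = Cᵀ *ᵥ m := by rw [hCt, fromRows_mulVec]
  rw [add_assoc, hCCt, hCtC, hCtm]
  exact ⟨posDef_one_add_mul_transpose C, posDef_one_add_transpose_mul C,
    dotProduct_inv_one_add_mul_transpose_mulVec C (posDef_one_add_transpose_mul C).isUnit m⟩
end

section
/- Let n, p, q be finite index types with |n| = d, let A be a real n×p matrix, B a real n×q matrix, let γ > 0, μ > 0, and let α ∈ ℝ with −1 < α < 1. Set s = (1−α)·γ + (1+α)·μ and c = (4/(1−α²))·log(s/2) − (2/(1+α))·log γ − (2/(1−α))·log μ. Then (4/(1−α²)) · log[ det( ((1−α)/2)·(A·Aᵀ + γ·1ₙ) + ((1+α)/2)·(B·Bᵀ + μ·1ₙ) ) / ( det(A·Aᵀ + γ·1ₙ)^((1−α)/2) · det(B·Bᵀ + μ·1ₙ)^((1+α)/2) ) ] = (4/(1−α²)) · log det( (1/s)·fromBlocks ((1−α)·Aᵀ·A) (√(1−α²)·Aᵀ·B) (√(1−α²)·Bᵀ·A) ((1+α)·Bᵀ·B)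 + 1 ) − (2/(1+α)) · log det( (1/γ)·Aᵀ·A + 1ₚ ) − (2/(1−α)) · log det( (1/μ)·Bᵀ·B + 1_q ) + c·d. -/
/-!
Sylvester's identity `det (1 + U * V) = det (1 + V * U)` gives
`det (A * Aᵀ + t • 1) = t ^ d * det (t⁻¹ • Aᵀ * A + 1)`, which handles the denominator.
The numerator's matrix is `(1/2) • (C * Cᵀ + s • 1)` for the stacked matrix
`C = [√(1-α) • A, √(1+α) • B]`, so its determinant is `(s/2) ^ d * det (1 + s⁻¹ • Cᵀ * C)`,
and `Cᵀ * C` is the block matrix on the right. Taking logarithms, the powers of `γ`, `μ` and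
`s/2` collect into `c * d`.
-/

open Matrix Real

theorem Real.log_div_rpow_mul_rpow {m x y : ℝ} (a b : ℝ) (hm : m ≠ 0) (hx : 0 < x) (hy : 0 < y) :
    log (m / (x ^ a * y ^ b)) = log m - a * log x - b * log y := by
  rw [log_div hm (by positivity), log_mul (by positivity) (by positivity), log_rpow hx, log_rpow hy]
  ring

namespace Matrix

variable {n p q R : Type*}

theorem det_mul_add_smul_one [Fintype n] [Fintype p] [DecidableEq n] [DecidableEq p] [Field R]
    (A : Matrix n p R) (B : Matrix p n R) {t : R} (ht : t ≠ 0) :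
    (A * B + t • 1).det = t ^ Fintype.card n * ((1 / t) • (B * A) + 1).det := by
  have hfactor : A * B + t • (1 : Matrix n n R) = t • ((1 / t) • A * B + 1) := by
    rw [smul_add, smul_mul, smul_smul, mul_one_div_cancel ht, one_smul]
  rw [hfactor, det_smul, det_mul_add_one_comm, Matrix.mul_smul]

theorem fromCols_smul_mul_transpose [Fintype p] [Fintype q] [CommRing R]
    (A : Matrix n p R) (B : Matrix n q R) (a b : R) :
    fromCols (a • A) (b • B) * (fromCols (a • A) (b • B))ᵀ =
      (a * a) • (A * Aᵀ) + (b * b) • (B * Bᵀ) := by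
  simp only [transpose_fromCols, fromCols_mul_fromRows, transpose_smul, Matrix.smul_mul,
    Matrix.mul_smul, smul_smul]

theorem transpose_fromCols_smul_mul [Fintype n] [CommRing R]
    (A : Matrix n p R) (B : Matrix n q R) (a b : R) :
    (fromCols (a • A) (b • B))ᵀ * fromCols (a • A) (b • B) =
      fromBlocks ((a * a) • (Aᵀ * A)) ((a * b) • (Aᵀ * B))
        ((a * b) • (Bᵀ * A)) ((b * b) • (Bᵀ * B)) := by
  simp only [transpose_fromCols, fromRows_mul_fromCols, transpose_smul, Matrix.smul_mul,
    Matrix.mul_smul, smul_smul, mul_comm b a]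

theorem posDef_smul_transpose_mul_add_one [Fintype n] [Finite p] [DecidableEq p]
    (A : Matrix n p ℝ) {t : ℝ} (ht : 0 ≤ t) :
    (t • (Aᵀ * A) + 1).PosDef := by
  rw [add_comm]
  exact PosDef.one.add_posSemidef ((posSemidef_conjTranspose_mul_self A).smul ht)

theorem posDef_mul_transpose_add_smul_one [Fintype n] [Fintype p] [DecidableEq n]
    (A : Matrix n p ℝ) {t : ℝ} (ht : 0 < t) : (A * Aᵀ + t • 1).PosDef := by
  rw [add_comm]
  exact (PosDef.one.smul ht).add_posSemidef (posSemidef_self_mul_conjTranspose A)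

theorem log_det_mul_transpose_add_smul_one [Fintype n] [Fintype p] [DecidableEq n] [DecidableEq p]
    (A : Matrix n p ℝ) {t : ℝ} (ht : 0 < t) :
    log (A * Aᵀ + t • 1).det = Fintype.card n * log t + log ((1 / t) • (Aᵀ * A) + 1).det := by
  have hdet := (posDef_smul_transpose_mul_add_one A (one_div_pos.2 ht).le).det_pos
  rw [det_mul_add_smul_one A Aᵀ ht.ne', log_mul (by positivity) hdet.ne', log_pow]

theorem log_det_alpha_mix [Fintype n] [Fintype p] [Fintype q] [DecidableEq n] [DecidableEq p]
    [DecidableEq q] (A : Matrix n p ℝ) (B : Matrix n q ℝ) {γ μ α s : ℝ} (hα₁ : -1 ≤ α) (hα₂ : α ≤ 1)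
    (hs : s = (1 - α) * γ + (1 + α) * μ) (hs_pos : 0 < s) :
    log (((1 - α) / 2) • (A * Aᵀ + γ • (1 : Matrix n n ℝ)) + ((1 + α) / 2) • (B * Bᵀ + μ • 1)).det =
      Fintype.card n * log (s / 2) +
        log (1 + (1 / s) • fromBlocks ((1 - α) • (Aᵀ * A)) (√(1 - α ^ 2) • (Aᵀ * B))
          (√(1 - α ^ 2) • (Bᵀ * A)) ((1 + α) • (Bᵀ * B))).det := by
  have hα₁' : 0 ≤ 1 + α := by linarith
  have hα₂' : 0 ≤ 1 - α := by linarith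
  set C := fromCols (√(1 - α) • A) (√(1 + α) • B)
  have hmix : ((1 - α) / 2) • (A * Aᵀ + γ • (1 : Matrix n n ℝ)) + ((1 + α) / 2) • (B * Bᵀ + μ • 1)
      = (1 / 2 : ℝ) • (C * Cᵀ + s • 1) := by
    rw [fromCols_smul_mul_transpose, mul_self_sqrt hα₂', mul_self_sqrt hα₁', hs]
    match_scalars <;> ring
  have hblocks : Cᵀ * C = fromBlocks ((1 - α) • (Aᵀ * A)) (√(1 - α ^ 2) • (Aᵀ * B))
      (√(1 - α ^ 2) • (Bᵀ * A)) ((1 + α) • (Bᵀ * B)) := by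
    rw [transpose_fromCols_smul_mul, mul_self_sqrt hα₂', mul_self_sqrt hα₁', ← sqrt_mul hα₂',
      show (1 - α) * (1 + α) = 1 - α ^ 2 by ring]
  have hpos := (posDef_smul_transpose_mul_add_one C (one_div_pos.2 hs_pos).le).det_pos
  rw [hblocks] at hpos
  rw [add_comm (1 : Matrix (p ⊕ q) (p ⊕ q) ℝ), hmix, det_smul, det_mul_add_smul_one C Cᵀ hs_pos.ne',
    hblocks, ← mul_assoc, ← mul_pow, one_div_mul_eq_div, log_mul (by positivity) hpos.ne', log_pow]

end Matrix

theorem logdet_alpha_divergence_finite_dim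
    {n p q : Type*} [Fintype n] [Fintype p] [Fintype q]
    [DecidableEq n] [DecidableEq p] [DecidableEq q]
    (d : ℕ) (hd : Fintype.card n = d)
    (A : Matrix n p ℝ) (B : Matrix n q ℝ)
    (γ μ α : ℝ) (hγ : 0 < γ) (hμ : 0 < μ) (hα₁ : -1 < α) (hα₂ : α < 1)
    (s c : ℝ)
    (hs : s = (1 - α) * γ + (1 + α) * μ)
    (hc : c = (4 / (1 - α ^ 2)) * Real.log (s / 2)
        - (2 / (1 + α)) * Real.log γ - (2 / (1 - α)) * Real.log μ) :
    (4 / (1 - α ^ 2)) * Real.log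
        ((((1 - α) / 2) • (A * Aᵀ + γ • (1 : Matrix n n ℝ)) +
            ((1 + α) / 2) • (B * Bᵀ + μ • (1 : Matrix n n ℝ))).det /
          ((A * Aᵀ + γ • (1 : Matrix n n ℝ)).det ^ ((1 - α) / 2) *
            (B * Bᵀ + μ • (1 : Matrix n n ℝ)).det ^ ((1 + α) / 2)))
    = (4 / (1 - α ^ 2)) * Real.log
          ((1 + (1 / s) •
              Matrix.fromBlocks ((1 - α) • (Aᵀ * A)) (Real.sqrt (1 - α ^ 2) • (Aᵀ * B))
                (Real.sqrt (1 - α ^ 2) • (Bᵀ * A)) ((1 + α) • (Bᵀ * B))).det)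
        - (2 / (1 + α)) * Real.log (((1 / γ) • (Aᵀ * A) + 1).det)
        - (2 / (1 - α)) * Real.log (((1 / μ) • (Bᵀ * B) + 1).det)
        + c * d := by
  have hα₁' : 0 < 1 + α := by linarith
  have hα₂' : 0 < 1 - α := by linarith
  have hX := posDef_mul_transpose_add_smul_one A hγ
  have hY := posDef_mul_transpose_add_smul_one B hμ
  have hM := (hX.smul (half_pos hα₂')).add (hY.smul (half_pos hα₁'))
  rw [log_div_rpow_mul_rpow _ _ hM.det_pos.ne' hX.det_pos hY.det_pos,
    log_det_alpha_mix A B hα₁.le hα₂.le hs (by rw [hs]; positivity),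
    log_det_mul_transpose_add_smul_one A hγ, log_det_mul_transpose_add_smul_one B hμ, hc, hd]
  have hα₃ : 1 - α ^ 2 ≠ 0 := by nlinarith
  field_simp
  ring
end

section
/- Let n, p, q be finite index types with |n| = d, let A be a real n×p matrix, B a real n×q matrix, and let γ > 0, μ > 0. Then the matrices B·Bᵀ + μ·1ₙ and 1_q + (1/μ)·Bᵀ·B are positive definite (hence invertible), and tr( (B·Bᵀ + μ·1ₙ)⁻¹·(A·Aᵀ + γ·1ₙ) − 1ₙ ) − log det( (B·Bᵀ + μ·1ₙ)⁻¹·(A·Aᵀ + γ·1ₙ) ) = (γ/μ − 1 − log(γ/μ))·d + (1/μ)·tr(Aᵀ·A) − (γ/μ)·tr[ ( (1/μ)·Bᵀ·B + (1/(γ·μ))·Bᵀ·A·Aᵀ·B ) · ( 1_q + (1/μ)·Bᵀ·B )⁻¹ ] + log det( (1/μ)·Bᵀ·B + 1_q ) − log det( (1/γ)·Aᵀ·A + 1ₚ ). -/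
open Matrix Real

/-! Write `Y = B Bᵀ + μ 1`. The Woodbury identity expresses `Y⁻¹` through the `q × q` matrix
`1 + μ⁻¹ Bᵀ B`, which turns the trace term into traces over `q`; the Weinstein–Aronszajn
identity `det (1 + C D) = det (1 + D C)` does the same for `log det Y` and
`log det (A Aᵀ + γ 1)`. -/

namespace Matrix

variable {m k : Type*} [Fintype m] [Fintype k]

theorem posDef_mul_transpose_add_smul_one_s16 [DecidableEq m] (C : Matrix m k ℝ) {c : ℝ}
    (hc : 0 < c) : (C * Cᵀ + c • (1 : Matrix m m ℝ)).PosDef := by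
  simpa using PosDef.posSemidef_add (posSemidef_self_mul_conjTranspose C) (PosDef.one.smul hc)

theorem posDef_one_add_smul_transpose_mul [DecidableEq k] (C : Matrix m k ℝ) {c : ℝ}
    (hc : 0 ≤ c) : ((1 : Matrix k k ℝ) + c • (Cᵀ * C)).PosDef := by
  simpa using PosDef.one.add_posSemidef ((posSemidef_conjTranspose_mul_self C).smul hc)

theorem det_mul_add_smul_one_s16 [DecidableEq m] [DecidableEq k] {K : Type*} [Field K]
    (C : Matrix m k K) (D : Matrix k m K) {c : K} (hc : c ≠ 0) :
    (C * D + c • (1 : Matrix m m K)).det = c ^ Fintype.card m * (c⁻¹ • (D * C) + 1).det := by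
  have : C * D + c • (1 : Matrix m m K) = c • (c⁻¹ • C * D + 1) := by
    rw [smul_add, Matrix.smul_mul, smul_smul, mul_inv_cancel₀ hc, one_smul]
  rw [this, det_smul, det_mul_add_one_comm, Matrix.mul_smul]

theorem log_det_mul_transpose_add_smul_one_s16 [DecidableEq m] [DecidableEq k] (C : Matrix m k ℝ)
    {c : ℝ} (hc : 0 < c) :
    log (C * Cᵀ + c • (1 : Matrix m m ℝ)).det
      = Fintype.card m * log c + log (c⁻¹ • (Cᵀ * C) + 1).det := by
  have hM := (posDef_one_add_smul_transpose_mul C (inv_nonneg.mpr hc.le)).det_pos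
  rw [det_mul_add_smul_one_s16 C Cᵀ hc.ne', add_comm _ (1 : Matrix k k ℝ),
    log_mul (pow_ne_zero _ hc.ne') hM.ne', log_pow]

theorem log_det_inv_mul [DecidableEq m] {X Y : Matrix m m ℝ} (hX : X.det ≠ 0)
    (hY : Y.det ≠ 0) : log (Y⁻¹ * X).det = log X.det - log Y.det := by
  rw [det_mul, det_nonsing_inv, Ring.inverse_eq_inv, log_mul (inv_ne_zero hY) hX, log_inv]
  ring

theorem inv_mul_transpose_add_smul_one [DecidableEq m] [DecidableEq k] (C : Matrix m k ℝ)
    {c : ℝ} (hc : 0 < c) :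
    (C * Cᵀ + c • (1 : Matrix m m ℝ))⁻¹
      = c⁻¹ • (1 - c⁻¹ • (C * (1 + c⁻¹ • (Cᵀ * C))⁻¹ * Cᵀ)) := by
  have hM := (posDef_one_add_smul_transpose_mul C (inv_nonneg.mpr hc.le)).isUnit
  have hc1 : (c • (1 : Matrix m m ℝ))⁻¹ = c⁻¹ • 1 :=
    inv_eq_left_inv (by rw [smul_mul_smul_comm, inv_mul_cancel₀ hc.ne', one_smul, Matrix.one_mul])
  have := add_mul_mul_inv_eq_sub (c • (1 : Matrix m m ℝ)) C 1 Cᵀ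
    (isUnit_one.smul (Units.mk0 c hc.ne')) isUnit_one (by simpa [hc1] using hM)
  rw [Matrix.mul_one, inv_one, hc1] at this
  rw [add_comm, this]
  simp [smul_sub, smul_smul, Matrix.mul_assoc]

theorem trace_inv_mul_transpose_add_smul_one_mul [DecidableEq m] [DecidableEq k]
    (C : Matrix m k ℝ) (X : Matrix m m ℝ) {c : ℝ} (hc : 0 < c) :
    ((C * Cᵀ + c • (1 : Matrix m m ℝ))⁻¹ * X).trace
      = c⁻¹ * X.trace - c⁻¹ ^ 2 * (Cᵀ * X * C * (1 + c⁻¹ • (Cᵀ * C))⁻¹).trace := by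
  have hcycle : (C * (1 + c⁻¹ • (Cᵀ * C))⁻¹ * Cᵀ * X).trace
      = (Cᵀ * X * C * (1 + c⁻¹ • (Cᵀ * C))⁻¹).trace := by
    rw [trace_mul_cycle, trace_mul_cycle, Matrix.mul_assoc, Matrix.mul_assoc, Matrix.mul_assoc]
  rw [inv_mul_transpose_add_smul_one C hc, Matrix.smul_mul, Matrix.sub_mul, Matrix.one_mul,
    Matrix.smul_mul, trace_smul, trace_sub, trace_smul, hcycle, smul_eq_mul, smul_eq_mul]
  ring

end Matrix

theorem logdet_alpha_one_divergence_finite_dim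
    {n p q : Type*} [Fintype n] [Fintype p] [Fintype q]
    [DecidableEq n] [DecidableEq p] [DecidableEq q]
    (d : ℕ) (hd : Fintype.card n = d)
    (A : Matrix n p ℝ) (B : Matrix n q ℝ)
    (γ μ : ℝ) (hγ : 0 < γ) (hμ : 0 < μ) :
    (B * Bᵀ + μ • (1 : Matrix n n ℝ)).PosDef ∧
    ((1 : Matrix q q ℝ) + (1 / μ) • (Bᵀ * B)).PosDef ∧
    ((B * Bᵀ + μ • (1 : Matrix n n ℝ))⁻¹ * (A * Aᵀ + γ • (1 : Matrix n n ℝ)) - 1).trace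
        - Real.log (((B * Bᵀ + μ • (1 : Matrix n n ℝ))⁻¹ *
            (A * Aᵀ + γ • (1 : Matrix n n ℝ))).det)
      = (γ / μ - 1 - Real.log (γ / μ)) * d
        + (1 / μ) * (Aᵀ * A).trace
        - (γ / μ) * ((((1 / μ) • (Bᵀ * B) + (1 / (γ * μ)) • (Bᵀ * A * Aᵀ * B)) *
            ((1 : Matrix q q ℝ) + (1 / μ) • (Bᵀ * B))⁻¹).trace)
        + Real.log (((1 / μ) • (Bᵀ * B) + 1).det)
        - Real.log (((1 / γ) • (Aᵀ * A) + 1).det) := by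
  have hX := posDef_mul_transpose_add_smul_one_s16 A hγ
  have hY := posDef_mul_transpose_add_smul_one_s16 B hμ
  refine ⟨hY, posDef_one_add_smul_transpose_mul B (by positivity), ?_⟩
  have hBXB : Bᵀ * (A * Aᵀ + γ • 1) * B = Bᵀ * A * Aᵀ * B + γ • (Bᵀ * B) := by
    simp only [Matrix.mul_add, Matrix.add_mul, Matrix.mul_smul, Matrix.smul_mul,
      Matrix.mul_one, Matrix.mul_assoc]
  simp only [one_div]
  rw [trace_sub, trace_inv_mul_transpose_add_smul_one_mul B _ hμ, hBXB,
    log_det_inv_mul hX.det_pos.ne' hY.det_pos.ne', log_det_mul_transpose_add_smul_one_s16 A hγ,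
    log_det_mul_transpose_add_smul_one_s16 B hμ, trace_add, trace_smul, trace_one, trace_mul_comm A,
    Matrix.add_mul, Matrix.add_mul, trace_add, trace_add, log_div hγ.ne' hμ.ne', hd]
  simp only [Matrix.smul_mul, trace_smul, smul_eq_mul]
  field_simp
  ring
end

section
/- Let A be a real symmetric n×n matrix such that 1 + A is positive definite. Then 0 ≤ tr(A) − log det(1 + A) ≤ ‖(1 + A)⁻¹‖·‖A‖_F² and 0 ≤ log det(1 + A) − tr( A·(1 + A)⁻¹ ) ≤ ‖(1 + A)⁻¹‖·‖A‖_F². If moreover A is positive semidefinite, then tr(A) − log det(1 + A) ≤ (1/2)·‖A‖_F² and log det(1 + A) − tr( A·(1 + A)⁻¹ ) ≤ (1/2)·‖A‖_F². -/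
open Matrix Real

/-- The Frobenius (Hilbert–Schmidt) norm of a real matrix. -/
noncomputable def matFrobNorm {m n : Type*} [Fintype m] [Fintype n]
    (A : Matrix m n ℝ) : ℝ :=
  Real.sqrt (∑ i, ∑ j, (A i j) ^ 2)

/-- The operator norm of the linear map induced by a real square matrix on
Euclidean space. -/
noncomputable def matOpNorm {n : Type*} [Fintype n] [DecidableEq n]
    (A : Matrix n n ℝ) : ℝ :=
  ‖(Matrix.toEuclideanCLM (𝕜 := ℝ) A : EuclideanSpace ℝ n →L[ℝ] EuclideanSpace ℝ n)‖

/-!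
Diagonalizing `A = U diag(μ) Uᴴ` with `U` orthogonal turns every quantity into a spectral sum:
`tr A - log det (1 + A) = ∑ (μᵢ - log (1 + μᵢ))`,
`log det (1 + A) - tr (A (1 + A)⁻¹) = ∑ (log (1 + μᵢ) - μᵢ / (1 + μᵢ))`, `‖A‖_F² = ∑ μᵢ²`,
and `(1 + μᵢ)⁻¹ ≤ ‖(1 + A)⁻¹‖` since conjugation by `U` preserves the operator norm. The theorem
then follows termwise from `1 - y⁻¹ ≤ log y ≤ y - 1` at `y = 1 + μᵢ > 0`, and for `μᵢ ≥ 0` from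
the sharper `2x / (x + 2) ≤ log (1 + x)` and `log y ≤ sinh (log y) = (y - y⁻¹) / 2`.
-/

namespace Real

lemma sub_log_one_add_le_inv_mul_sq {x : ℝ} (hx : 0 < 1 + x) :
    x - log (1 + x) ≤ (1 + x)⁻¹ * x ^ 2 := by
  have h : 1 - (1 + x)⁻¹ = x - (1 + x)⁻¹ * x ^ 2 := by field_simp; ring
  linarith [one_sub_inv_le_log_of_pos hx]

lemma log_one_add_sub_mul_inv_le_inv_mul_sq {x : ℝ} (hx : 0 < 1 + x) :
    log (1 + x) - x * (1 + x)⁻¹ ≤ (1 + x)⁻¹ * x ^ 2 := by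
  have h : x * (1 + x)⁻¹ + (1 + x)⁻¹ * x ^ 2 = x := by field_simp
  linarith [log_le_sub_one_of_pos hx]

lemma mul_inv_one_add_le_log_one_add {x : ℝ} (hx : 0 < 1 + x) : x * (1 + x)⁻¹ ≤ log (1 + x) := by
  have h : x * (1 + x)⁻¹ = 1 - (1 + x)⁻¹ := by field_simp; ring
  exact h ▸ one_sub_inv_le_log_of_pos hx

lemma sub_log_one_add_le_sq_div_two {x : ℝ} (hx : 0 ≤ x) : x - log (1 + x) ≤ x ^ 2 / 2 := by
  have h : x - 2 * x / (x + 2) = x ^ 2 / (x + 2) := by field_simp; ring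
  have : x ^ 2 / (x + 2) ≤ x ^ 2 / 2 :=
    div_le_div_of_nonneg_left (sq_nonneg x) two_pos (by linarith)
  linarith [le_log_one_add_of_nonneg hx]

lemma log_le_sub_inv_div_two {y : ℝ} (hy : 1 ≤ y) : log y ≤ (y - y⁻¹) / 2 := by
  rw [← sinh_log (by positivity)]
  exact self_le_sinh_iff.mpr (log_nonneg hy)

lemma log_one_add_sub_mul_inv_le_sq_div_two {x : ℝ} (hx : 0 ≤ x) :
    log (1 + x) - x * (1 + x)⁻¹ ≤ x ^ 2 / 2 := by
  have h : (1 + x - (1 + x)⁻¹) / 2 - x * (1 + x)⁻¹ = x ^ 2 / (2 * (1 + x)) := by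
    field_simp; ring
  have : x ^ 2 / (2 * (1 + x)) ≤ x ^ 2 / 2 :=
    div_le_div_of_nonneg_left (sq_nonneg x) two_pos (by linarith)
  linarith [log_le_sub_inv_div_two (le_add_of_nonneg_right hx)]

end Real

open Unitary

lemma CStarRing.norm_conjStarAlgAut {S E : Type*} [NormedRing E] [StarRing E] [CStarRing E]
    [SMul S E] [IsScalarTower S E E] [SMulCommClass S E E] (U : unitary E) (x : E) :
    ‖conjStarAlgAut S E U x‖ = ‖x‖ := by
  rw [conjStarAlgAut_apply, ← coe_star, CStarRing.norm_mul_coe_unitary,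
    CStarRing.norm_coe_unitary_mul]

namespace Matrix

lemma matFrobNorm_sq_eq_trace_mul_transpose {m n : Type*} [Fintype m] [Fintype n]
    (A : Matrix m n ℝ) :
    matFrobNorm A ^ 2 = (A * Aᵀ).trace := by
  rw [matFrobNorm, sq_sqrt (by positivity)]
  simp [trace, mul_apply, sq]

variable {n : Type*} [Fintype n] [DecidableEq n]

lemma trace_conjStarAlgAut {R : Type*} [CommRing R] [StarRing R] (U : unitary (Matrix n n R))
    (M : Matrix n n R) : (conjStarAlgAut R _ U M).trace = M.trace := by
  rw [conjStarAlgAut_apply, trace_mul_cycle, coe_star_mul_self, one_mul]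

lemma det_conjStarAlgAut {R : Type*} [CommRing R] [StarRing R] (U : unitary (Matrix n n R))
    (M : Matrix n n R) : (conjStarAlgAut R _ U M).det = M.det := by
  rw [conjStarAlgAut_apply, det_mul_right_comm, ← coe_star, coe_mul_star_self, one_mul]

lemma matOpNorm_conjStarAlgAut (U : unitary (Matrix n n ℝ)) (M : Matrix n n ℝ) :
    matOpNorm (conjStarAlgAut ℝ _ U M) = matOpNorm M := by
  -- `matOpNorm` is definitionally the norm of the C⋆-ring `Matrix.Norms.L2Operator`
  open scoped Matrix.Norms.L2Operator in
  exact CStarRing.norm_conjStarAlgAut U M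

lemma abs_le_matOpNorm_diagonal (d : n → ℝ) (i : n) : |d i| ≤ matOpNorm (diagonal d) := by
  simpa [matOpNorm, l2_opNorm_toEuclideanCLM] using norm_le_pi_norm d i

namespace IsHermitian

variable {A : Matrix n n ℝ}

lemma conjStarAlgAut_diagonal_eigenvalues (hA : A.IsHermitian) :
    conjStarAlgAut ℝ _ hA.eigenvectorUnitary (diagonal hA.eigenvalues) = A := by
  simpa using hA.spectral_theorem.symm

lemma one_add_eq_conjStarAlgAut (hA : A.IsHermitian) :
    1 + A = conjStarAlgAut ℝ _ hA.eigenvectorUnitary (diagonal fun i ↦ 1 + hA.eigenvalues i) := by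
  rw [← diagonal_add, diagonal_one, map_add, map_one, hA.conjStarAlgAut_diagonal_eigenvalues]

lemma posDef_one_add_iff (hA : A.IsHermitian) :
    (1 + A).PosDef ↔ ∀ i, 0 < 1 + hA.eigenvalues i := by
  rw [hA.one_add_eq_conjStarAlgAut]
  simp [isUnit_coe.posDef_star_right_conjugate_iff]

lemma inv_one_add_eq_conjStarAlgAut (hA : A.IsHermitian) (h : ∀ i, 1 + hA.eigenvalues i ≠ 0) :
    (1 + A)⁻¹ =
      conjStarAlgAut ℝ _ hA.eigenvectorUnitary (diagonal fun i ↦ (1 + hA.eigenvalues i)⁻¹) := by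
  refine inv_eq_right_inv ?_
  rw [hA.one_add_eq_conjStarAlgAut, ← map_mul, diagonal_mul_diagonal]
  simp [h]

lemma trace_eq_sum_eigenvalues_real (hA : A.IsHermitian) : A.trace = ∑ i, hA.eigenvalues i := by
  simpa using hA.trace_eq_sum_eigenvalues

lemma log_det_one_add (hA : A.IsHermitian) (h : ∀ i, 0 < 1 + hA.eigenvalues i) :
    log (1 + A).det = ∑ i, log (1 + hA.eigenvalues i) := by
  rw [hA.one_add_eq_conjStarAlgAut, det_conjStarAlgAut, det_diagonal,
    log_prod fun i _ ↦ (h i).ne']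

lemma trace_mul_inv_one_add (hA : A.IsHermitian) (h : ∀ i, 1 + hA.eigenvalues i ≠ 0) :
    (A * (1 + A)⁻¹).trace = ∑ i, hA.eigenvalues i * (1 + hA.eigenvalues i)⁻¹ := by
  rw [hA.inv_one_add_eq_conjStarAlgAut h]
  conv_lhs => enter [1, 1]; rw [← hA.conjStarAlgAut_diagonal_eigenvalues]
  rw [← map_mul, trace_conjStarAlgAut, diagonal_mul_diagonal, trace_diagonal]

lemma matFrobNorm_sq_eq_sum_eigenvalues_sq (hA : A.IsHermitian) :
    matFrobNorm A ^ 2 = ∑ i, hA.eigenvalues i ^ 2 := by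
  rw [matFrobNorm_sq_eq_trace_mul_transpose, isHermitian_iff_isSymm.mp hA]
  conv_lhs => rw [← hA.conjStarAlgAut_diagonal_eigenvalues]
  rw [← map_mul, trace_conjStarAlgAut, diagonal_mul_diagonal, trace_diagonal]
  simp only [sq]

lemma inv_one_add_eigenvalues_le_matOpNorm (hA : A.IsHermitian)
    (h : ∀ i, 0 < 1 + hA.eigenvalues i) (i : n) :
    (1 + hA.eigenvalues i)⁻¹ ≤ matOpNorm (1 + A)⁻¹ := by
  rw [hA.inv_one_add_eq_conjStarAlgAut fun i ↦ (h i).ne', matOpNorm_conjStarAlgAut]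
  simpa [abs_of_pos (h i)] using abs_le_matOpNorm_diagonal (fun j ↦ (1 + hA.eigenvalues j)⁻¹) i

end IsHermitian
end Matrix

theorem logdet_Hilbert_Carleman_bound
    {n : Type*} [Fintype n] [DecidableEq n]
    (A : Matrix n n ℝ) (hA : A.IsSymm) (hpos : ((1 : Matrix n n ℝ) + A).PosDef) :
    (0 ≤ A.trace - Real.log ((1 + A).det) ∧
      A.trace - Real.log ((1 + A).det) ≤
        matOpNorm ((1 + A)⁻¹) * (matFrobNorm A) ^ 2) ∧
    (0 ≤ Real.log ((1 + A).det) - (A * (1 + A)⁻¹).trace ∧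
      Real.log ((1 + A).det) - (A * (1 + A)⁻¹).trace ≤
        matOpNorm ((1 + A)⁻¹) * (matFrobNorm A) ^ 2) ∧
    (A.PosSemidef →
      A.trace - Real.log ((1 + A).det) ≤ (1 / 2) * (matFrobNorm A) ^ 2 ∧
      Real.log ((1 + A).det) - (A * (1 + A)⁻¹).trace ≤
        (1 / 2) * (matFrobNorm A) ^ 2) := by
  have hH : A.IsHermitian := isHermitian_iff_isSymm.mpr hA
  have hμ := hH.posDef_one_add_iff.mp hpos
  have hop := hH.inv_one_add_eigenvalues_le_matOpNorm hμ
  rw [hH.trace_eq_sum_eigenvalues_real, hH.log_det_one_add hμ,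
    hH.trace_mul_inv_one_add fun i ↦ (hμ i).ne', hH.matFrobNorm_sq_eq_sum_eigenvalues_sq,
    ← Finset.sum_sub_distrib, ← Finset.sum_sub_distrib, Finset.mul_sum, Finset.mul_sum]
  refine ⟨⟨Finset.sum_nonneg fun i _ ↦ ?_, Finset.sum_le_sum fun i _ ↦ ?_⟩,
    ⟨Finset.sum_nonneg fun i _ ↦ ?_, Finset.sum_le_sum fun i _ ↦ ?_⟩,
    fun hpsd ↦ ⟨Finset.sum_le_sum fun i _ ↦ ?_, Finset.sum_le_sum fun i _ ↦ ?_⟩⟩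
  · linarith [log_le_sub_one_of_pos (hμ i)]
  · exact (sub_log_one_add_le_inv_mul_sq (hμ i)).trans (by gcongr; exact hop i)
  · linarith [mul_inv_one_add_le_log_one_add (hμ i)]
  · exact (log_one_add_sub_mul_inv_le_inv_mul_sq (hμ i)).trans (by gcongr; exact hop i)
  · linarith [sub_log_one_add_le_sq_div_two (hpsd.eigenvalues_nonneg i)]
  · linarith [log_one_add_sub_mul_inv_le_sq_div_two (hpsd.eigenvalues_nonneg i)]
end

section
/- Let A and B be real symmetric n×n matrices such that 1 + A and 1 + B are positive definite. Then | (tr A − log det(1 + A)) − (tr B − log det(1 + B)) | ≤ ‖(1 + A)⁻¹‖·‖(1 + B)⁻¹‖·( ‖A‖_F + ‖B‖_F + ‖A‖_F·‖B‖_F )·‖A − B‖_F, and the same upper bound holds for | (log det(1 + A) − tr(A·(1 + A)⁻¹)) − (log det(1 + B) − tr(B·(1 + B)⁻¹)) |. If moreover A and B are positive semidefinite, then both left-hand sides are bounded above by (1/2)·( ‖A‖_F + ‖B‖_F )·‖A − B‖_F. -/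
open Matrix Real

/-!
Write `P = 1 + X`, `Q = 1 + Y`. Concavity of `log det` on positive definite matrices,
`log det Q - log det P ≤ tr (P⁻¹ Q) - n`, follows from `log t ≤ t - 1` applied to the eigenvalues
of `P^{-1/2} Q P^{-1/2}`. It gives `f X - f Y ≤ tr (X P⁻¹ (X - Y))` for
`f X = tr X - log det (1 + X)`, and, applied to `P⁻¹, Q⁻¹`, it gives
`g X - g Y ≤ tr (X P⁻¹ (X - Y) Q⁻¹)` for `g X = log det (1 + X) - tr (X (1 + X)⁻¹)`.
Cauchy–Schwarz for the trace pairing and `‖M N‖_F ≤ ‖M‖_F ‖N‖` bound these traces, and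
`1 ≤ ‖Q⁻¹‖ ‖Q‖ ≤ ‖Q⁻¹‖ (1 + ‖Y‖_F)` brings them to the symmetric form of the statement.

For positive semidefinite `X` one has `‖(1 + X)⁻¹‖ ≤ 1`, hence `φ X - φ Y ≤ ‖X‖_F ‖X - Y‖_F` for
both functions on the convex cone of such matrices. Summing this along finer and finer
subdivisions of the segment from `B` to `A` turns `‖X‖_F` into its average `(‖A‖_F + ‖B‖_F) / 2`.
-/

open Filter Topology

section Interpolation

variable {E : Type*} [SeminormedAddCommGroup E] [NormedSpace ℝ E] {s : Set E} {φ : E → ℝ}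

theorem sub_le_half_norm_add_mul_norm_sub_add_div (hs : Convex ℝ s)
    (hφ : ∀ x ∈ s, ∀ y ∈ s, φ x - φ y ≤ ‖x‖ * ‖x - y‖) {a b : E} (ha : a ∈ s) (hb : b ∈ s)
    {m : ℕ} (hm : 0 < m) :
    φ a - φ b ≤ 1 / 2 * (‖a‖ + ‖b‖) * ‖a - b‖ + (‖a‖ - ‖b‖) * ‖a - b‖ / (2 * m) := by
  have hm' : (0 : ℝ) < m := by exact_mod_cast hm
  set p : ℕ → E := fun k => b + ((k : ℝ) / m) • (a - b) with hp
  have ht : ∀ k ≤ m, 0 ≤ (k : ℝ) / m ∧ (k : ℝ) / m ≤ 1 := fun k hk =>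
    ⟨by positivity, (div_le_one hm').2 (by exact_mod_cast hk)⟩
  have hp_conv : ∀ k, p k = (1 - (k : ℝ) / m) • b + ((k : ℝ) / m) • a := fun k => by
    simp only [hp, smul_sub, sub_smul, one_smul]; abel
  have hp_mem : ∀ k ≤ m, p k ∈ s := fun k hk => by
    rw [hp_conv]
    exact hs hb ha (by linarith [ht k hk]) (ht k hk).1 (by ring)
  have hp_norm : ∀ k ≤ m, ‖p k‖ ≤ ‖b‖ + (k : ℝ) / m * (‖a‖ - ‖b‖) := fun k hk => by
    rw [hp_conv]
    refine (norm_add_le _ _).trans_eq ?_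
    rw [norm_smul_of_nonneg (by linarith [ht k hk]), norm_smul_of_nonneg (ht k hk).1]
    ring
  have hp_step : ∀ k, p (k + 1) - p k = (1 / (m : ℝ)) • (a - b) := fun k => by
    simp only [hp, add_sub_add_left_eq_sub, ← sub_smul]; congr 1; push_cast; ring
  have partial_sum : ∀ k ≤ m, φ (p k) - φ b ≤
      (k * ‖b‖ + (‖a‖ - ‖b‖) * (k * (k + 1)) / (2 * m)) * (‖a - b‖ / m) := by
    intro k hk
    induction k with
    | zero => simp [hp]
    | succ k ih =>
      have hstep := hφ _ (hp_mem _ hk) _ (hp_mem k (by omega))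
      rw [hp_step, norm_smul, Real.norm_of_nonneg (by positivity), one_div_mul_eq_div] at hstep
      have hnorm := mul_le_mul_of_nonneg_right (hp_norm _ hk)
        (by positivity : 0 ≤ ‖a - b‖ / m)
      push_cast at hnorm ⊢
      linear_combination hstep + hnorm + ih (by omega)
  have hpm : p m = a := by simp [hp, div_self hm'.ne']
  refine (hpm ▸ partial_sum m le_rfl).trans_eq ?_
  field_simp
  ring

theorem sub_le_half_norm_add_mul_norm_sub (hs : Convex ℝ s)
    (hφ : ∀ x ∈ s, ∀ y ∈ s, φ x - φ y ≤ ‖x‖ * ‖x - y‖) {a b : E} (ha : a ∈ s) (hb : b ∈ s) :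
    φ a - φ b ≤ 1 / 2 * (‖a‖ + ‖b‖) * ‖a - b‖ := by
  have hlim : Tendsto (fun m : ℕ => 1 / 2 * (‖a‖ + ‖b‖) * ‖a - b‖ +
      (‖a‖ - ‖b‖) * ‖a - b‖ / 2 / m) atTop (𝓝 (1 / 2 * (‖a‖ + ‖b‖) * ‖a - b‖)) := by
    simpa using (tendsto_const_div_atTop_nhds_zero_nat ((‖a‖ - ‖b‖) * ‖a - b‖ / 2)).const_add
      (1 / 2 * (‖a‖ + ‖b‖) * ‖a - b‖)
  refine ge_of_tendsto hlim (eventually_atTop.2 ⟨1, fun m hm => ?_⟩)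
  rw [div_div]
  exact sub_le_half_norm_add_mul_norm_sub_add_div hs hφ ha hb hm

theorem abs_sub_le_half_norm_add_mul_norm_sub (hs : Convex ℝ s)
    (hφ : ∀ x ∈ s, ∀ y ∈ s, φ x - φ y ≤ ‖x‖ * ‖x - y‖) {a b : E} (ha : a ∈ s) (hb : b ∈ s) :
    |φ a - φ b| ≤ 1 / 2 * (‖a‖ + ‖b‖) * ‖a - b‖ :=
  abs_sub_le_iff.2 ⟨sub_le_half_norm_add_mul_norm_sub hs hφ ha hb,
    (sub_le_half_norm_add_mul_norm_sub hs hφ hb ha).trans_eq (by rw [norm_sub_rev]; ring)⟩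

end Interpolation

section Frobenius

attribute [local instance] Matrix.frobeniusNormedAddCommGroup Matrix.frobeniusNormedSpace

variable {m n : Type*} [Fintype m] [Fintype n]

theorem matFrobNorm_eq_norm (A : Matrix m n ℝ) : matFrobNorm A = ‖A‖ := by
  rw [frobenius_norm_def, matFrobNorm, Real.sqrt_eq_rpow]
  simp [Real.norm_eq_abs, sq_abs]

theorem matFrobNorm_sub_comm (A B : Matrix m n ℝ) : matFrobNorm (A - B) = matFrobNorm (B - A) := by
  simp only [matFrobNorm_eq_norm, norm_sub_rev]

theorem matOpNorm_le_matFrobNorm [DecidableEq n] (A : Matrix n n ℝ) :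
    matOpNorm A ≤ matFrobNorm A := by
  refine ContinuousLinearMap.opNorm_le_bound _ (Real.sqrt_nonneg _) fun x => ?_
  rw [matFrobNorm_eq_norm, ← WithLp.toLp_ofLp (p := 2) x, toEuclideanCLM_toLp,
    ← frobenius_norm_replicateCol (ι := Unit), ← frobenius_norm_replicateCol (ι := Unit),
    replicateCol_mulVec]
  exact frobenius_norm_mul _ _

theorem abs_sub_le_half_matFrobNorm_add_mul_of_posSemidef {φ : Matrix n n ℝ → ℝ}
    (hφ : ∀ X Y : Matrix n n ℝ, X.PosSemidef → Y.PosSemidef →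
      φ X - φ Y ≤ matFrobNorm X * matFrobNorm (X - Y))
    {A B : Matrix n n ℝ} (hA : A.PosSemidef) (hB : B.PosSemidef) :
    |φ A - φ B| ≤ 1 / 2 * (matFrobNorm A + matFrobNorm B) * matFrobNorm (A - B) := by
  simp only [matFrobNorm_eq_norm] at hφ ⊢
  exact abs_sub_le_half_norm_add_mul_norm_sub (s := {X : Matrix n n ℝ | X.PosSemidef})
    (fun X hX Y hY a b ha hb _ => (hX.smul ha).add (hY.smul hb))
    (fun X hX Y hY => hφ X Y hX hY) hA hB

end Frobenius

section Operator

open scoped Matrix.Norms.L2Operator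

variable {n : Type*} [Fintype n] [DecidableEq n]

theorem matOpNorm_eq_norm (A : Matrix n n ℝ) : matOpNorm A = ‖A‖ := rfl

theorem matOpNorm_nonneg (A : Matrix n n ℝ) : 0 ≤ matOpNorm A := norm_nonneg _

theorem matOpNorm_transpose (A : Matrix n n ℝ) : matOpNorm Aᵀ = matOpNorm A := by
  rw [matOpNorm_eq_norm, matOpNorm_eq_norm, ← conjTranspose_eq_transpose_of_trivial,
    l2_opNorm_conjTranspose]

theorem one_le_matOpNorm_inv_one_add_mul [Nonempty n] {A : Matrix n n ℝ}
    (hA : IsUnit (1 + A).det) : 1 ≤ matOpNorm (1 + A)⁻¹ * (1 + matOpNorm A) := by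
  have h := l2_opNorm_mul (1 + A)⁻¹ (1 + A)
  rw [nonsing_inv_mul _ hA, norm_one] at h
  exact h.trans (mul_le_mul_of_nonneg_left ((norm_add_le _ _).trans_eq (by rw [norm_one]; rfl))
    (norm_nonneg _))

open scoped RealInnerProductSpace in
theorem matOpNorm_inv_one_add_le_one {A : Matrix n n ℝ} (hA : A.PosSemidef) :
    matOpNorm (1 + A)⁻¹ ≤ 1 := by
  have hunit : IsUnit (1 + A).det := (PosDef.one.add_posSemidef hA).det_pos.ne'.isUnit
  refine ContinuousLinearMap.opNorm_le_bound _ zero_le_one fun x => ?_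
  set y := toEuclideanCLM (𝕜 := ℝ) (1 + A)⁻¹ x
  have hxy : x = y + toEuclideanCLM (𝕜 := ℝ) A y := by
    have h : toEuclideanCLM (𝕜 := ℝ) (1 + A) y = x := by
      rw [← mul_apply_eq_comp, ← map_mul, mul_nonsing_inv _ hunit, map_one, one_apply_eq_self]
    rw [← h, map_add, map_one, _root_.add_apply, one_apply_eq_self]
  have hAy : 0 ≤ ⟪y, toEuclideanCLM (𝕜 := ℝ) A y⟫ :=
    (isPositive_toEuclideanLin_iff.2 hA).inner_nonneg_right y
  have hsq : ‖y‖ ^ 2 ≤ ‖y‖ * ‖x‖ := calc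
    ‖y‖ ^ 2 ≤ ⟪y, x⟫ := by
      rw [hxy, inner_add_right, real_inner_self_eq_norm_sq]; linarith
    _ ≤ ‖y‖ * ‖x‖ := real_inner_le_norm y x
  nlinarith [norm_nonneg x, norm_nonneg y]

end Operator

section FrobeniusProducts

variable {m n : Type*} [Fintype m] [Fintype n]

theorem matFrobNorm_nonneg (A : Matrix m n ℝ) : 0 ≤ matFrobNorm A := Real.sqrt_nonneg _

theorem matFrobNorm_transpose (A : Matrix m n ℝ) : matFrobNorm Aᵀ = matFrobNorm A := by
  rw [matFrobNorm, matFrobNorm, Finset.sum_comm]; rfl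

theorem matFrobNorm_sq_eq_sum_norm_col_sq (A : Matrix n m ℝ) :
    matFrobNorm A ^ 2 = ∑ j, ‖WithLp.toLp 2 (fun i => A i j)‖ ^ 2 := by
  rw [matFrobNorm, Real.sq_sqrt (by positivity), Finset.sum_comm]
  simp [EuclideanSpace.norm_sq_eq]

theorem trace_mul_le_matFrobNorm_mul_matFrobNorm (A : Matrix m n ℝ) (B : Matrix n m ℝ) :
    (A * B).trace ≤ matFrobNorm A * matFrobNorm B := by
  have h := Real.sum_mul_le_sqrt_mul_sqrt (Finset.univ : Finset (m × n))
    (fun p => A p.1 p.2) (fun p => B p.2 p.1)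
  simp only [Fintype.sum_prod_type] at h
  rw [Finset.sum_comm (f := fun x y => B y x ^ 2)] at h
  simpa [trace, mul_apply, matFrobNorm] using h

theorem matFrobNorm_mul_le_matOpNorm_mul_matFrobNorm [DecidableEq n] (A : Matrix n n ℝ)
    (B : Matrix n m ℝ) : matFrobNorm (A * B) ≤ matOpNorm A * matFrobNorm B := by
  refine le_of_sq_le_sq ?_ (mul_nonneg (norm_nonneg _) (matFrobNorm_nonneg _))
  rw [mul_pow, matFrobNorm_sq_eq_sum_norm_col_sq, matFrobNorm_sq_eq_sum_norm_col_sq,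
    Finset.mul_sum]
  refine Finset.sum_le_sum fun j _ => ?_
  rw [← mul_pow]
  refine pow_le_pow_left₀ (norm_nonneg _) ?_ 2
  have h := (toEuclideanCLM (𝕜 := ℝ) A).le_opNorm (WithLp.toLp 2 fun i => B i j)
  rwa [toEuclideanCLM_toLp] at h

theorem matFrobNorm_mul_le_matFrobNorm_mul_matOpNorm [DecidableEq n] (A : Matrix m n ℝ)
    (B : Matrix n n ℝ) : matFrobNorm (A * B) ≤ matFrobNorm A * matOpNorm B := by
  rw [← matFrobNorm_transpose, transpose_mul, ← matFrobNorm_transpose A, mul_comm,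
    ← matOpNorm_transpose B]
  exact matFrobNorm_mul_le_matOpNorm_mul_matFrobNorm _ _

end FrobeniusProducts

section LogDet

variable {n : Type*} [Fintype n] [DecidableEq n]

theorem Matrix.PosDef.log_det_le_trace_sub_card {T : Matrix n n ℝ} (hT : T.PosDef) :
    Real.log T.det ≤ T.trace - Fintype.card n := by
  have hev := hT.eigenvalues_pos
  rw [hT.1.det_eq_prod_eigenvalues, hT.1.trace_eq_sum_eigenvalues]
  simp only [RCLike.ofReal_real_eq_id, id]
  rw [Real.log_prod fun i _ => (hev i).ne', ← Finset.card_univ, ← nsmul_one, ← Finset.sum_const,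
    ← Finset.sum_sub_distrib]
  exact Finset.sum_le_sum fun i _ => Real.log_le_sub_one_of_pos (hev i)

open scoped MatrixOrder in
theorem Matrix.PosDef.log_det_sub_log_det_le {P Q : Matrix n n ℝ} (hP : P.PosDef) (hQ : Q.PosDef) :
    Real.log Q.det - Real.log P.det ≤ (P⁻¹ * Q).trace - Fintype.card n := by
  set S := CFC.sqrt P
  have hSS : S * S = P := CFC.sqrt_mul_sqrt_self P hP.posSemidef.nonneg
  have hS : S.PosDef := by
    refine (CFC.sqrt_nonneg P).posSemidef.posDef_iff_isUnit.2 ?_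
    exact isUnit_mul_self_iff.1 (hSS.symm ▸ hP.isUnit)
  have hSdet : S.det * S.det = P.det := by rw [← det_mul, hSS]
  set T := S⁻¹ * Q * S⁻¹
  have hT : T.PosDef := by
    refine (?_ : T.PosSemidef).posDef_iff_isUnit.2 ?_
    · simpa only [hS.inv.1.eq] using hQ.posSemidef.mul_mul_conjTranspose_same S⁻¹
    · exact (hS.inv.isUnit.mul hQ.isUnit).mul hS.inv.isUnit
  have hTdet : T.det = Q.det / P.det := by
    rw [det_mul, det_mul, det_nonsing_inv, ← hSdet, Ring.inverse_eq_inv]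
    field_simp [hS.det_pos.ne']
  have hTtr : T.trace = (P⁻¹ * Q).trace := by
    rw [trace_mul_cycle, ← hSS, mul_inv_rev, Matrix.mul_assoc]
  have := hT.log_det_le_trace_sub_card
  rwa [hTdet, hTtr, Real.log_div hQ.det_pos.ne' hP.det_pos.ne'] at this

theorem trace_sub_log_det_sub_le {X Y : Matrix n n ℝ} (hX : (1 + X).PosDef) (hY : (1 + Y).PosDef) :
    (X.trace - Real.log (1 + X).det) - (Y.trace - Real.log (1 + Y).det) ≤
      (X * (1 + X)⁻¹ * (X - Y)).trace := by
  have h := hX.log_det_sub_log_det_le hY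
  have hP := hX.det_pos.ne'.isUnit
  set P := 1 + X
  set Q := 1 + Y
  rw [show X = P - 1 by simp [P], show Y = Q - 1 by simp [Q]]
  simp only [Matrix.sub_mul, Matrix.mul_sub, Matrix.one_mul, mul_nonsing_inv _ hP,
    nonsing_inv_mul _ hP, sub_sub_sub_cancel_right, trace_sub, trace_one]
  linarith

theorem log_det_sub_trace_sub_le {X Y : Matrix n n ℝ} (hX : (1 + X).PosDef) (hY : (1 + Y).PosDef) :
    (Real.log (1 + X).det - (X * (1 + X)⁻¹).trace) -
        (Real.log (1 + Y).det - (Y * (1 + Y)⁻¹).trace) ≤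
      (X * (1 + X)⁻¹ * ((X - Y) * (1 + Y)⁻¹)).trace := by
  have h := hX.inv.log_det_sub_log_det_le hY.inv
  have hP := hX.det_pos.ne'.isUnit
  have hQ := hY.det_pos.ne'.isUnit
  set P := 1 + X
  set Q := 1 + Y
  rw [nonsing_inv_nonsing_inv _ hP, det_nonsing_inv, det_nonsing_inv, Ring.inverse_eq_inv,
    Ring.inverse_eq_inv, Real.log_inv, Real.log_inv] at h
  rw [show X = P - 1 by simp [P], show Y = Q - 1 by simp [Q]]
  simp only [Matrix.sub_mul, Matrix.mul_sub, Matrix.one_mul, Matrix.mul_one,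
    mul_nonsing_inv _ hP, mul_nonsing_inv _ hQ, nonsing_inv_mul_cancel_left _ _ hP,
    sub_sub_sub_cancel_right, trace_sub, trace_one]
  linarith

end LogDet

section Bounds

variable {n : Type*} [Fintype n] [DecidableEq n] {X Y : Matrix n n ℝ}

theorem trace_sub_log_det_sub_le_mul (hX : (1 + X).PosDef) (hY : (1 + Y).PosDef) :
    (X.trace - Real.log (1 + X).det) - (Y.trace - Real.log (1 + Y).det) ≤
      matFrobNorm X * matOpNorm (1 + X)⁻¹ * matFrobNorm (X - Y) :=
  (trace_sub_log_det_sub_le hX hY).trans <| (trace_mul_le_matFrobNorm_mul_matFrobNorm _ _).trans <|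
    mul_le_mul_of_nonneg_right (matFrobNorm_mul_le_matFrobNorm_mul_matOpNorm _ _)
      (matFrobNorm_nonneg _)

theorem log_det_sub_trace_sub_le_mul (hX : (1 + X).PosDef) (hY : (1 + Y).PosDef) :
    (Real.log (1 + X).det - (X * (1 + X)⁻¹).trace) -
        (Real.log (1 + Y).det - (Y * (1 + Y)⁻¹).trace) ≤
      matFrobNorm X * matOpNorm (1 + X)⁻¹ * (matFrobNorm (X - Y) * matOpNorm (1 + Y)⁻¹) :=
  (log_det_sub_trace_sub_le hX hY).trans <| (trace_mul_le_matFrobNorm_mul_matFrobNorm _ _).trans <|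
    mul_le_mul (matFrobNorm_mul_le_matFrobNorm_mul_matOpNorm _ _)
      (matFrobNorm_mul_le_matFrobNorm_mul_matOpNorm _ _) (matFrobNorm_nonneg _)
      (mul_nonneg (matFrobNorm_nonneg _) (matOpNorm_nonneg _))

theorem matFrobNorm_le_matOpNorm_inv_one_add_mul (hY : IsUnit (1 + Y).det) (X : Matrix n n ℝ) :
    matFrobNorm X ≤
      matOpNorm (1 + Y)⁻¹ * (matFrobNorm X + matFrobNorm Y + matFrobNorm X * matFrobNorm Y) := by
  have hFX := matFrobNorm_nonneg X
  have hFY := matFrobNorm_nonneg Y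
  have hop := matOpNorm_nonneg (1 + Y)⁻¹
  rcases isEmpty_or_nonempty n with _ | _
  · rw [show matFrobNorm X = 0 by simp [matFrobNorm]]
    positivity
  · have h := (one_le_matOpNorm_inv_one_add_mul hY).trans
      (mul_le_mul_of_nonneg_left (add_le_add le_rfl (matOpNorm_le_matFrobNorm Y)) hop)
    nlinarith

theorem trace_sub_log_det_sub_le_lipschitz (hX : (1 + X).PosDef) (hY : (1 + Y).PosDef) :
    (X.trace - Real.log (1 + X).det) - (Y.trace - Real.log (1 + Y).det) ≤
      matOpNorm (1 + X)⁻¹ * matOpNorm (1 + Y)⁻¹ *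
        (matFrobNorm X + matFrobNorm Y + matFrobNorm X * matFrobNorm Y) * matFrobNorm (X - Y) := by
  refine (trace_sub_log_det_sub_le_mul hX hY).trans ?_
  have h := matFrobNorm_le_matOpNorm_inv_one_add_mul hY.det_pos.ne'.isUnit X
  have hXY := mul_nonneg (matOpNorm_nonneg (1 + X)⁻¹) (matFrobNorm_nonneg (X - Y))
  calc matFrobNorm X * matOpNorm (1 + X)⁻¹ * matFrobNorm (X - Y)
      = matFrobNorm X * (matOpNorm (1 + X)⁻¹ * matFrobNorm (X - Y)) := by ring
    _ ≤ _ := mul_le_mul_of_nonneg_right h hXY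
    _ = _ := by ring

theorem log_det_sub_trace_sub_le_lipschitz (hX : (1 + X).PosDef) (hY : (1 + Y).PosDef) :
    (Real.log (1 + X).det - (X * (1 + X)⁻¹).trace) -
        (Real.log (1 + Y).det - (Y * (1 + Y)⁻¹).trace) ≤
      matOpNorm (1 + X)⁻¹ * matOpNorm (1 + Y)⁻¹ *
        (matFrobNorm X + matFrobNorm Y + matFrobNorm X * matFrobNorm Y) * matFrobNorm (X - Y) := by
  refine (log_det_sub_trace_sub_le_mul hX hY).trans ?_
  have h : matFrobNorm X ≤ matFrobNorm X + matFrobNorm Y + matFrobNorm X * matFrobNorm Y := by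
    have := matFrobNorm_nonneg X; have := matFrobNorm_nonneg Y; nlinarith
  have hXY := mul_nonneg (mul_nonneg (matOpNorm_nonneg (1 + X)⁻¹) (matOpNorm_nonneg (1 + Y)⁻¹))
    (matFrobNorm_nonneg (X - Y))
  calc matFrobNorm X * matOpNorm (1 + X)⁻¹ * (matFrobNorm (X - Y) * matOpNorm (1 + Y)⁻¹)
      = matFrobNorm X * (matOpNorm (1 + X)⁻¹ * matOpNorm (1 + Y)⁻¹ * matFrobNorm (X - Y)) := by
        ring
    _ ≤ _ := mul_le_mul_of_nonneg_right h hXY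
    _ = _ := by ring

theorem trace_sub_log_det_sub_le_of_posSemidef (hX : X.PosSemidef) (hY : Y.PosSemidef) :
    (X.trace - Real.log (1 + X).det) - (Y.trace - Real.log (1 + Y).det) ≤
      matFrobNorm X * matFrobNorm (X - Y) := by
  refine (trace_sub_log_det_sub_le_mul (PosDef.one.add_posSemidef hX)
    (PosDef.one.add_posSemidef hY)).trans ?_
  have := mul_le_mul_of_nonneg_left (matOpNorm_inv_one_add_le_one hX) (matFrobNorm_nonneg X)
  rw [mul_one] at this
  exact mul_le_mul_of_nonneg_right this (matFrobNorm_nonneg _)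

theorem log_det_sub_trace_sub_le_of_posSemidef (hX : X.PosSemidef) (hY : Y.PosSemidef) :
    (Real.log (1 + X).det - (X * (1 + X)⁻¹).trace) -
        (Real.log (1 + Y).det - (Y * (1 + Y)⁻¹).trace) ≤
      matFrobNorm X * matFrobNorm (X - Y) := by
  refine (log_det_sub_trace_sub_le_mul (PosDef.one.add_posSemidef hX)
    (PosDef.one.add_posSemidef hY)).trans ?_
  have hop := mul_le_mul_of_nonneg_left (matOpNorm_inv_one_add_le_one hX) (matFrobNorm_nonneg X)
  have hop' := mul_le_mul_of_nonneg_left (matOpNorm_inv_one_add_le_one hY)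
    (matFrobNorm_nonneg (X - Y))
  rw [mul_one] at hop hop'
  exact mul_le_mul hop hop' (mul_nonneg (matFrobNorm_nonneg _) (matOpNorm_nonneg _))
    (matFrobNorm_nonneg _)

end Bounds

theorem logdet_Hilbert_Carleman_lipschitz_general
    {n : Type*} [Fintype n] [DecidableEq n]
    (A B : Matrix n n ℝ)
    (hposA : ((1 : Matrix n n ℝ) + A).PosDef) (hposB : ((1 : Matrix n n ℝ) + B).PosDef) :
    (|(A.trace - Real.log ((1 + A).det)) - (B.trace - Real.log ((1 + B).det))| ≤
      matOpNorm ((1 + A)⁻¹) * matOpNorm ((1 + B)⁻¹) *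
        (matFrobNorm A + matFrobNorm B + matFrobNorm A * matFrobNorm B) *
        matFrobNorm (A - B)) ∧
    (|(Real.log ((1 + A).det) - (A * (1 + A)⁻¹).trace) -
        (Real.log ((1 + B).det) - (B * (1 + B)⁻¹).trace)| ≤
      matOpNorm ((1 + A)⁻¹) * matOpNorm ((1 + B)⁻¹) *
        (matFrobNorm A + matFrobNorm B + matFrobNorm A * matFrobNorm B) *
        matFrobNorm (A - B)) ∧
    (A.PosSemidef → B.PosSemidef →
      |(A.trace - Real.log ((1 + A).det)) - (B.trace - Real.log ((1 + B).det))| ≤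
        (1 / 2) * (matFrobNorm A + matFrobNorm B) * matFrobNorm (A - B) ∧
      |(Real.log ((1 + A).det) - (A * (1 + A)⁻¹).trace) -
          (Real.log ((1 + B).det) - (B * (1 + B)⁻¹).trace)| ≤
        (1 / 2) * (matFrobNorm A + matFrobNorm B) * matFrobNorm (A - B)) := by
  have hsymm : matOpNorm ((1 + B)⁻¹) * matOpNorm ((1 + A)⁻¹) *
        (matFrobNorm B + matFrobNorm A + matFrobNorm B * matFrobNorm A) * matFrobNorm (B - A) =
      matOpNorm ((1 + A)⁻¹) * matOpNorm ((1 + B)⁻¹) *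
        (matFrobNorm A + matFrobNorm B + matFrobNorm A * matFrobNorm B) * matFrobNorm (A - B) := by
    rw [matFrobNorm_sub_comm]; ring
  refine ⟨abs_sub_le_iff.2 ⟨trace_sub_log_det_sub_le_lipschitz hposA hposB,
      hsymm ▸ trace_sub_log_det_sub_le_lipschitz hposB hposA⟩,
    abs_sub_le_iff.2 ⟨log_det_sub_trace_sub_le_lipschitz hposA hposB,
      hsymm ▸ log_det_sub_trace_sub_le_lipschitz hposB hposA⟩,
    fun hA hB => ⟨?_, ?_⟩⟩
  · exact abs_sub_le_half_matFrobNorm_add_mul_of_posSemidef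
      (φ := fun X => X.trace - Real.log (1 + X).det)
      (fun _ _ => trace_sub_log_det_sub_le_of_posSemidef) hA hB
  · exact abs_sub_le_half_matFrobNorm_add_mul_of_posSemidef
      (φ := fun X => Real.log (1 + X).det - (X * (1 + X)⁻¹).trace)
      (fun _ _ => log_det_sub_trace_sub_le_of_posSemidef) hA hB

theorem logdet_Hilbert_Carleman_lipschitz
    {n : Type*} [Fintype n] [DecidableEq n]
    (A B : Matrix n n ℝ) (hA : A.IsSymm) (hB : B.IsSymm)
    (hposA : ((1 : Matrix n n ℝ) + A).PosDef) (hposB : ((1 : Matrix n n ℝ) + B).PosDef) :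
    (|(A.trace - Real.log ((1 + A).det)) - (B.trace - Real.log ((1 + B).det))| ≤
      matOpNorm ((1 + A)⁻¹) * matOpNorm ((1 + B)⁻¹) *
        (matFrobNorm A + matFrobNorm B + matFrobNorm A * matFrobNorm B) *
        matFrobNorm (A - B)) ∧
    (|(Real.log ((1 + A).det) - (A * (1 + A)⁻¹).trace) -
        (Real.log ((1 + B).det) - (B * (1 + B)⁻¹).trace)| ≤
      matOpNorm ((1 + A)⁻¹) * matOpNorm ((1 + B)⁻¹) *
        (matFrobNorm A + matFrobNorm B + matFrobNorm A * matFrobNorm B) *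
        matFrobNorm (A - B)) ∧
    (A.PosSemidef → B.PosSemidef →
      |(A.trace - Real.log ((1 + A).det)) - (B.trace - Real.log ((1 + B).det))| ≤
        (1 / 2) * (matFrobNorm A + matFrobNorm B) * matFrobNorm (A - B) ∧
      |(Real.log ((1 + A).det) - (A * (1 + A)⁻¹).trace) -
          (Real.log ((1 + B).det) - (B * (1 + B)⁻¹).trace)| ≤
        (1 / 2) * (matFrobNorm A + matFrobNorm B) * matFrobNorm (A - B)) :=
  logdet_Hilbert_Carleman_lipschitz_general A B hposA hposB
end
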